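/- arXiv:2510.04624 — 13 statements merged into one kernel-verified Lean document; each statement's English description precedes it below -/
import Mathlib

section
/- Let B be an m×m matrix with non-negative integer entries such that every row sum and every column sum equals a common positive integer T. Then B can be written as a sum α₁M₁ + ... + α_dM_d where each M_k is an m×m permutation matrix, each α_k is a positive integer, α₁ + ... + α_d = T, and d ≤ m² - m + 1. -/
/-!
By Hall's theorem, a non-negative integer matrix with all line sums equal to `T > 0` has a
permutation `σ` with `B i (σ i) ≠ 0` for all `i`. Subtracting `a • P_σ`, where `a` is the least
of these entries, leaves a matrix with all line sums `T - a` whose support has lost at least the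
entry where the minimum is attained. Since a support containing a permutation has at least `m`
entries, the support shrinks from at most `m²` to at least `m` entries, so at most `m² - m + 1`
permutations are peeled off.
-/

open Finset

namespace Matrix

variable {n : Type*}

def support [Fintype n] (B : Matrix n n ℕ) : Finset (n × n) := {p | B p.1 p.2 ≠ 0}

theorem card_le_card_support [Fintype n] {B : Matrix n n ℕ} {σ : Equiv.Perm n}
    (hσ : ∀ i, B i (σ i) ≠ 0) : Fintype.card n ≤ #B.support :=
  card_le_card_of_injOn (fun i => (i, σ i)) (fun i _ => by simpa [support] using hσ i)
    fun _ _ _ _ h => (Prod.mk.inj h).1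

variable [DecidableEq n]

def HasPermDecomposition (B : Matrix n n ℕ) (T d : ℕ) : Prop :=
  ∃ (α : Fin d → ℕ) (σ : Fin d → Equiv.Perm n), (∀ k, 0 < α k) ∧ ∑ k, α k = T ∧
    ∀ i j, B i j = ∑ k, α k * if σ k i = j then 1 else 0

theorem hasPermDecomposition_zero : HasPermDecomposition (0 : Matrix n n ℕ) 0 0 :=
  ⟨Fin.elim0, Fin.elim0, fun k => k.elim0, by simp, by simp⟩

theorem HasPermDecomposition.cons {B B' : Matrix n n ℕ} {T d a : ℕ} {σ : Equiv.Perm n}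
    (h : HasPermDecomposition B' T d) (ha : 0 < a)
    (hB : ∀ i j, B i j = (a * if σ i = j then 1 else 0) + B' i j) :
    HasPermDecomposition B (a + T) (d + 1) := by
  obtain ⟨α, τ, hα, hαT, hB'⟩ := h
  refine ⟨Fin.cons a α, Fin.cons σ τ, Fin.cases ha hα, ?_, fun i j => ?_⟩
  · simp [Fin.sum_univ_succ, hαT]
  · simp [Fin.sum_univ_succ, hB, hB']

/-- `B - a • P_σ`, computed with truncated subtraction. -/
def subPerm (B : Matrix n n ℕ) (σ : Equiv.Perm n) (a : ℕ) : Matrix n n ℕ :=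
  fun i j => B i j - a * if σ i = j then 1 else 0

section subPerm

variable {B : Matrix n n ℕ} {σ : Equiv.Perm n} {a : ℕ}

theorem mul_ite_perm_apply_le (hle : ∀ i, a ≤ B i (σ i)) (i j : n) :
    (a * if σ i = j then 1 else 0) ≤ B i j := by
  split_ifs with h
  · simpa [← h] using hle i
  · simp

theorem eq_add_subPerm (hle : ∀ i, a ≤ B i (σ i)) (i j : n) :
    B i j = (a * if σ i = j then 1 else 0) + B.subPerm σ a i j :=
  (Nat.add_sub_cancel' (mul_ite_perm_apply_le hle i j)).symm

variable [Fintype n]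

theorem sum_subPerm_row {T : ℕ} (hle : ∀ i, a ≤ B i (σ i)) (hrow : ∀ i, ∑ j, B i j = T)
    (i : n) : ∑ j, B.subPerm σ a i j = T - a := by
  simp only [subPerm]
  rw [sum_tsub_distrib _ fun j _ => mul_ite_perm_apply_le hle i j, hrow]
  simp

theorem sum_subPerm_col {T : ℕ} (hle : ∀ i, a ≤ B i (σ i)) (hcol : ∀ j, ∑ i, B i j = T)
    (j : n) : ∑ i, B.subPerm σ a i j = T - a := by
  simp only [subPerm]
  rw [sum_tsub_distrib _ fun i _ => mul_ite_perm_apply_le hle i j, hcol]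
  simp [← σ.eq_symm_apply]

theorem support_subPerm_ssubset {i₀ : n} (ha : a ≠ 0)
    (hi₀ : B i₀ (σ i₀) = a) : (B.subPerm σ a).support ⊂ B.support := by
  have hsub : (B.subPerm σ a).support ⊆ B.support := fun p => by
    simp only [support, mem_filter_univ]
    exact fun hp h => hp (by simp [subPerm, h])
  refine (ssubset_iff_of_subset hsub).mpr ⟨(i₀, σ i₀), ?_, ?_⟩
  · simpa [support, hi₀]
  · simp [support, subPerm, hi₀]

end subPerm

variable [Fintype n] {B : Matrix n n ℕ} {T : ℕ}

theorem card_le_card_biUnion_rowSupport (hT : 0 < T)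
    (hrow : ∀ i, ∑ j, B i j = T) (hcol : ∀ j, ∑ i, B i j = T) (s : Finset n) :
    #s ≤ #(s.biUnion fun i => {j | B i j ≠ 0}) := by
  set N := s.biUnion fun i => {j | B i j ≠ 0}
  refine Nat.le_of_mul_le_mul_left ?_ hT
  calc T * #s = ∑ i ∈ s, ∑ j ∈ {j | B i j ≠ 0}, B i j := by
        simp [sum_filter_ne_zero, hrow, mul_comm]
    _ ≤ ∑ i ∈ s, ∑ j ∈ N, B i j := sum_le_sum fun i hi =>
        sum_le_sum_of_subset (subset_biUnion_of_mem (fun i => {j | B i j ≠ 0}) hi)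
    _ = ∑ j ∈ N, ∑ i ∈ s, B i j := sum_comm
    _ ≤ ∑ j ∈ N, ∑ i, B i j := sum_le_sum fun j _ => sum_le_sum_of_subset (subset_univ s)
    _ = T * #N := by simp [hcol, mul_comm]

theorem exists_perm_forall_ne_zero (hT : 0 < T)
    (hrow : ∀ i, ∑ j, B i j = T) (hcol : ∀ j, ∑ i, B i j = T) :
    ∃ σ : Equiv.Perm n, ∀ i, B i (σ i) ≠ 0 := by
  obtain ⟨f, hf, hfB⟩ := (all_card_le_biUnion_card_iff_exists_injective _).mp
    (card_le_card_biUnion_rowSupport hT hrow hcol)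
  exact ⟨.ofBijective f (Finite.injective_iff_bijective.mp hf), fun i => by simpa using hfB i⟩

theorem exists_hasPermDecomposition (hT : 0 < T)
    (hrow : ∀ i, ∑ j, B i j = T) (hcol : ∀ j, ∑ i, B i j = T) :
    ∃ d, d + Fintype.card n ≤ #B.support + 1 ∧ HasPermDecomposition B T d := by
  induction hs : #B.support using Nat.strong_induction_on generalizing T B with
  | _ s ih =>
  rcases isEmpty_or_nonempty n with _ | _
  · exact ⟨1, by simp, fun _ => T, fun _ => 1, by simp [hT], by simp, isEmptyElim⟩
  obtain ⟨σ, hσ⟩ := exists_perm_forall_ne_zero hT hrow hcol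
  obtain ⟨i₀, hle⟩ := Finite.exists_min fun i => B i (σ i)
  set a := B i₀ (σ i₀)
  have ha : 0 < a := Nat.pos_of_ne_zero (hσ i₀)
  have haT : a ≤ T := hrow i₀ ▸ single_le_sum (fun j _ => Nat.zero_le (B i₀ j)) (mem_univ _)
  obtain ⟨d, hd, hdec⟩ :
      ∃ d, d + Fintype.card n ≤ s ∧ HasPermDecomposition (B.subPerm σ a) (T - a) d := by
    rcases haT.eq_or_lt with rfl | haT
    · have hzero : B.subPerm σ a = 0 := by
        ext i j
        refine sum_eq_zero_iff.mp ?_ j (mem_univ j)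
        rw [sum_subPerm_row hle hrow, Nat.sub_self]
      refine ⟨0, hs ▸ by simpa using card_le_card_support hσ, ?_⟩
      rw [hzero, Nat.sub_self]
      exact hasPermDecomposition_zero
    · have hlt : #(B.subPerm σ a).support < s :=
        hs ▸ card_lt_card (support_subPerm_ssubset ha.ne' rfl)
      obtain ⟨d, hd, hdec⟩ := ih _ hlt (Nat.sub_pos_of_lt haT) (sum_subPerm_row hle hrow)
        (sum_subPerm_col hle hcol) rfl
      exact ⟨d, by omega, hdec⟩
  exact ⟨d + 1, by omega, Nat.add_sub_cancel' haT ▸ hdec.cons ha (eq_add_subPerm hle)⟩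

end Matrix

/-- Birkhoff–von Neumann for scaled integer bistochastic matrices:
an m×m matrix of non-negative integers with all row and column sums equal to T > 0
is a positive-integer combination of at most m² - m + 1 permutation matrices,
with coefficients summing to T. -/
theorem scaled_bistochastic_decomposition (m T : ℕ) (hT : 0 < T)
    (B : Matrix (Fin m) (Fin m) ℕ)
    (hrow : ∀ i, ∑ j, B i j = T) (hcol : ∀ j, ∑ i, B i j = T) :
    ∃ d : ℕ, d ≤ m ^ 2 - m + 1 ∧
      ∃ (α : Fin d → ℕ) (σ : Fin d → Equiv.Perm (Fin m)),
        (∀ k, 0 < α k) ∧ (∑ k, α k = T) ∧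
        ∀ i j, B i j = ∑ k, α k * (if σ k i = j then 1 else 0) := by
  obtain ⟨d, hd, hdec⟩ := B.exists_hasPermDecomposition hT hrow hcol
  have hsupp : #B.support ≤ m ^ 2 := by simpa [sq] using card_le_univ B.support
  rw [Fintype.card_fin] at hd
  exact ⟨d, by omega, hdec⟩
end

section
/- Let N = [n] be a set of agents, G a set of m ≥ n goods, and for each agent i a non-negative utility function u_i : G → ℝ≥0. A matching (injective map M : N → G) is Pareto optimal if and only if there exists a permutation π of N such that M is π-optimal. -/
/-!
A Pareto improvement of `M` violates π-optimality for every `π`. Conversely, rank the agents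
greedily, each time choosing an agent whom no matching can make strictly better off without
hurting an already ranked agent; `M` is then π-optimal for that ranking.

Such an agent exists as long as the ranked set `s` is proper. Otherwise each `j ∉ s` has a
matching that weakly helps `s` and strictly helps `j`, extended to a permutation `ρ j` of the goods.
Walk through the goods by `ρ J`, where the leader `J` is the owner outside `s` of the latest good
visited that has one. At the first repeated good the leader cannot have stayed fixed since the
earlier visit, as `ρ J` is injective, so the closed part of the walk contains a good owned
outside `s`. Rotating the goods along it gives every owner on it the image of its good under a
leader's permutation, and each owner outside `s` its own: a Pareto improvement of `M`.
-/

open Function Set Equiv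

variable {α β γ : Type*}

theorem exists_lt_eq_injOn_Iio [Finite β] (A : ℕ → β) :
    ∃ k l, k < l ∧ A l = A k ∧ InjOn A (Iio l) := by
  classical
  have hex : ∃ l k, k < l ∧ A l = A k := by
    obtain ⟨a, b, hne, hab⟩ := Finite.exists_ne_map_eq_of_infinite A
    rcases hne.lt_or_gt with h | h
    exacts [⟨b, a, h, hab.symm⟩, ⟨a, b, h, hab⟩]
  obtain ⟨k, hkl, hA⟩ := Nat.find_spec hex
  refine ⟨k, Nat.find hex, hkl, hA, fun p hp q hq hpq => ?_⟩
  by_contra hne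
  rcases lt_or_gt_of_ne hne with h | h
  · exact Nat.find_min hex hq ⟨p, h, hpq.symm⟩
  · exact Nat.find_min hex hp ⟨q, h, hpq⟩

theorem exists_perm_apply_eq_succ (A : ℕ → β) {k l : ℕ} (hA : A l = A k)
    (hinj : InjOn A (Ico k l)) :
    ∃ c : Perm β, (∀ p ∈ Ico k l, c (A p) = A (p + 1)) ∧ ∀ x ∉ A '' Ico k l, c x = x := by
  classical
  have hmem : ∀ p, p ∈ List.range' k (l - k) ↔ p ∈ Ico k l := fun p => by
    simp only [List.mem_range'_1, mem_Ico]
    omega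
  have hnodup : ((List.range' k (l - k)).map A).Nodup :=
    (List.nodup_range' (step := 1)).map_on fun p hp q hq h =>
      hinj ((hmem p).1 hp) ((hmem q).1 hq) h
  refine ⟨((List.range' k (l - k)).map A).formPerm, fun p ⟨hkp, hpl⟩ => ?_,
    fun x hx => List.formPerm_apply_of_notMem ?_⟩
  · have h := List.formPerm_apply_getElem _ hnodup (p - k)
      (by simp only [List.length_map, List.length_range']; omega)
    simp only [List.getElem_map, List.getElem_range', List.length_map, List.length_range',
      one_mul, Nat.add_sub_cancel' hkp] at h
    rw [h]
    rcases Nat.lt_or_ge (p + 1) l with h' | h'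
    · rw [Nat.mod_eq_of_lt (by omega)]
      congr 1
      omega
    · rw [show p - k + 1 = l - k by omega, Nat.mod_self, add_zero, show p + 1 = l by omega, hA]
  · rw [List.mem_map]
    rintro ⟨p, hp, rfl⟩
    exact hx ⟨p, (hmem p).1 hp, rfl⟩

theorem exists_list_forall_take [Fintype α] (P : Set α → α → Prop)
    (hP : ∀ s ≠ univ, ∃ i ∉ s, P s i) {k : ℕ} (hk : k ≤ Fintype.card α) :
    ∃ L : List α, L.length = k ∧ L.Nodup ∧
      ∀ p (hp : p < L.length), P {x | x ∈ L.take p} L[p] := by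
  classical
  induction k with
  | zero => exact ⟨[], rfl, List.nodup_nil, fun p hp => absurd hp (Nat.not_lt_zero p)⟩
  | succ k ih =>
    obtain ⟨L, hlen, hnd, hL⟩ := ih (by omega)
    have hne : {x | x ∈ L} ≠ univ := by
      intro h
      have hsub : Finset.univ ⊆ L.toFinset := fun x _ =>
        List.mem_toFinset.2 (h.symm ▸ mem_univ x : x ∈ {x | x ∈ L})
      have := (Finset.card_le_card hsub).trans L.toFinset_card_le
      rw [Finset.card_univ] at this
      omega
    obtain ⟨i, hi, hPi⟩ := hP _ hne
    refine ⟨L ++ [i], by simp [hlen], hnd.append (List.nodup_singleton i) (by simpa using hi),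
      fun p hp => ?_⟩
    rcases (Nat.lt_succ_iff.1 (by simpa using hp)).lt_or_eq with hp | rfl
    · rw [List.take_append_of_le_length hp.le, List.getElem_append_left hp]
      exact hL p hp
    · simpa using hPi

theorem exists_equiv_fin_forall_lt [Fintype α] {n : ℕ} (hn : Fintype.card α = n)
    (P : Set α → α → Prop) (hP : ∀ s ≠ univ, ∃ i ∉ s, P s i) :
    ∃ π : α ≃ Fin n, ∀ i, P {j | π j < π i} i := by
  classical
  obtain ⟨L, hlen, hnd, hL⟩ := exists_list_forall_take P hP hn.ge
  have hall : ∀ x, x ∈ L := by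
    have := Finset.eq_univ_of_card L.toFinset
      ((List.toFinset_card_of_nodup hnd).trans (hlen.trans hn.symm))
    simpa [Finset.eq_univ_iff_forall] using this
  set e := hnd.getEquivOfForallMemList L hall
  refine ⟨e.symm.trans (finCongr hlen), fun i => ?_⟩
  have hset : {j | e.symm j < e.symm i} = {x | x ∈ L.take (e.symm i)} := by
    ext x
    simp only [mem_ofPred_eq, List.mem_take_iff_getElem]
    constructor
    · intro h
      exact ⟨e.symm x, by simpa using h, e.apply_symm_apply x⟩
    · rintro ⟨q, hq, rfl⟩
      rw [show e.symm L[q] = ⟨q, by omega⟩ from e.symm_apply_eq.2 rfl, Fin.lt_def]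
      exact (lt_min_iff.1 hq).1
  have hPi := hL (e.symm i) (e.symm i).2
  rw [← hset] at hPi
  simpa [e, Fin.lt_def] using hPi

open Classical in
noncomputable def tradeStep (s : Set α) (M : α → β) (ρ : α → Perm β) (x : β × α) : β × α :=
  (ρ x.2 x.1, if h : ∃ j ∉ s, M j = ρ x.2 x.1 then h.choose else x.2)

noncomputable def tradeWalk (s : Set α) (M : α → β) (ρ : α → Perm β) (i₀ : α) (p : ℕ) : β × α :=
  (tradeStep s M ρ)^[p] (M i₀, i₀)

namespace tradeWalk

variable {s : Set α} {M : α → β} {ρ : α → Perm β} {i₀ : α}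

theorem fst_succ (p : ℕ) :
    (tradeWalk s M ρ i₀ (p + 1)).1 = ρ (tradeWalk s M ρ i₀ p).2 (tradeWalk s M ρ i₀ p).1 := by
  simp only [tradeWalk, iterate_succ_apply', tradeStep]

open Classical in
theorem snd_succ (p : ℕ) : (tradeWalk s M ρ i₀ (p + 1)).2 =
    if h : ∃ j ∉ s, M j = (tradeWalk s M ρ i₀ (p + 1)).1 then h.choose
    else (tradeWalk s M ρ i₀ p).2 := by
  simp only [tradeWalk, iterate_succ_apply', tradeStep]

theorem snd_notMem (hi₀ : i₀ ∉ s) (p : ℕ) : (tradeWalk s M ρ i₀ p).2 ∉ s := by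
  induction p with
  | zero => exact hi₀
  | succ p ih =>
    rw [snd_succ]
    split_ifs with h
    exacts [h.choose_spec.1, ih]

theorem snd_eq_of_fst_eq (hM : Injective M) {j : α} (hj : j ∉ s) {p : ℕ}
    (h : (tradeWalk s M ρ i₀ p).1 = M j) : (tradeWalk s M ρ i₀ p).2 = j := by
  cases p with
  | zero => exact hM h
  | succ p =>
    have hex : ∃ j ∉ s, M j = (tradeWalk s M ρ i₀ (p + 1)).1 := ⟨j, hj, h.symm⟩
    rw [snd_succ, dif_pos hex]
    exact hM (hex.choose_spec.2.trans h)

theorem exists_fst_eq_of_snd_ne {a b : ℕ} (hab : a ≤ b)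
    (h : (tradeWalk s M ρ i₀ a).2 ≠ (tradeWalk s M ρ i₀ b).2) :
    ∃ p, a < p ∧ p ≤ b ∧ ∃ j ∉ s, M j = (tradeWalk s M ρ i₀ p).1 := by
  induction b, hab using Nat.le_induction with
  | base => exact absurd rfl h
  | succ b hab ih =>
    by_cases hex : ∃ j ∉ s, M j = (tradeWalk s M ρ i₀ (b + 1)).1
    · exact ⟨b + 1, by omega, le_rfl, hex⟩
    · rw [snd_succ, dif_neg hex] at h
      obtain ⟨p, hap, hpb, hp⟩ := ih h
      exact ⟨p, hap, hpb.trans b.le_succ, hp⟩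

theorem exists_fst_eq_of_injOn (hi₀ : i₀ ∉ s) {k l : ℕ} (hkl : k < l)
    (hA : (tradeWalk s M ρ i₀ l).1 = (tradeWalk s M ρ i₀ k).1)
    (hinj : InjOn (fun p => (tradeWalk s M ρ i₀ p).1) (Iio l)) :
    ∃ p ∈ Ico k l, ∃ j ∉ s, M j = (tradeWalk s M ρ i₀ p).1 := by
  cases k with
  | zero => exact ⟨0, ⟨le_rfl, hkl⟩, i₀, hi₀, rfl⟩
  | succ k =>
    obtain ⟨l, rfl⟩ : ∃ l', l = l' + 1 := ⟨l - 1, by omega⟩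
    have hne : (tradeWalk s M ρ i₀ k).2 ≠ (tradeWalk s M ρ i₀ l).2 := by
      intro h
      have : (tradeWalk s M ρ i₀ k).1 = (tradeWalk s M ρ i₀ l).1 := by
        rw [fst_succ, fst_succ, ← h] at hA
        exact ((ρ _).injective hA).symm
      exact absurd (hinj (by simp only [mem_Iio]; omega) (by simp only [mem_Iio]; omega) this)
        (by omega)
    obtain ⟨p, hkp, hpl, hp⟩ := exists_fst_eq_of_snd_ne (by omega) hne
    exact ⟨p, ⟨hkp, by omega⟩, hp⟩

end tradeWalk

section Matching

variable [Preorder γ] (u : α → β → γ)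

def IsParetoOptimal (M : α → β) : Prop :=
  ¬ ∃ M' : α → β, Injective M' ∧ (∀ i, u i (M i) ≤ u i (M' i)) ∧ ∃ i, u i (M i) < u i (M' i)

def IsPriorityOptimal {ι : Type*} [LT ι] (π : α → ι) (M : α → β) : Prop :=
  ¬ ∃ M' : α → β, Injective M' ∧ (∃ i, u i (M i) < u i (M' i)) ∧
    ∀ i, u i (M i) < u i (M' i) → ∀ i', π i' < π i → u i' (M i') ≤ u i' (M' i')

def IsUnimprovableGiven (M : α → β) (s : Set α) (i : α) : Prop :=
  ∀ M' : α → β, Injective M' → (∀ t ∈ s, u t (M t) ≤ u t (M' t)) → ¬ u i (M i) < u i (M' i)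

variable {u}

theorem not_isParetoOptimal_of_perms [Finite β] {M : α → β} (hM : Injective M) {s : Set α}
    {i₀ : α} (hi₀ : i₀ ∉ s) (ρ : α → Perm β)
    (hρs : ∀ j ∉ s, ∀ t ∈ s, u t (M t) ≤ u t (ρ j (M t)))
    (hρj : ∀ j ∉ s, u j (M j) < u j (ρ j (M j))) : ¬ IsParetoOptimal u M := by
  set A := fun p => (tradeWalk s M ρ i₀ p).1
  obtain ⟨k, l, hkl, hA, hinj⟩ := exists_lt_eq_injOn_Iio A
  obtain ⟨c, hc_on, hc_off⟩ := exists_perm_apply_eq_succ A hA (hinj.mono Ico_subset_Iio_self)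
  have hc_leader : ∀ p ∈ Ico k l, c (A p) = ρ (tradeWalk s M ρ i₀ p).2 (A p) := fun p hp =>
    (hc_on p hp).trans (tradeWalk.fst_succ p)
  have hweak : ∀ t, u t (M t) ≤ u t (c (M t)) := by
    intro t
    by_cases ht : M t ∈ A '' Ico k l
    · obtain ⟨p, hp, hpt⟩ := ht
      rw [← hpt, hc_leader p hp, hpt]
      by_cases hts : t ∈ s
      · exact hρs _ (tradeWalk.snd_notMem hi₀ p) t hts
      · rw [tradeWalk.snd_eq_of_fst_eq hM hts hpt]
        exact (hρj t hts).le
    · rw [hc_off _ ht]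
  obtain ⟨p, hp, j, hj, hjp⟩ := tradeWalk.exists_fst_eq_of_injOn hi₀ hkl hA hinj
  have hstrict : u j (M j) < u j (c (M j)) := by
    have hcj := hc_leader p hp
    rw [show A p = M j from hjp.symm, tradeWalk.snd_eq_of_fst_eq hM hj hjp.symm] at hcj
    exact hcj ▸ hρj j hj
  exact fun hPO => hPO ⟨c ∘ M, c.injective.comp hM, hweak, j, hstrict⟩

theorem IsParetoOptimal.exists_isUnimprovableGiven [Finite β] {M : α → β} (hM : Injective M)
    (hPO : IsParetoOptimal u M) {s : Set α} (hs : s ≠ univ) :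
    ∃ i ∉ s, IsUnimprovableGiven u M s i := by
  by_contra! h
  obtain ⟨i₀, hi₀⟩ := ne_univ_iff_exists_notMem s |>.1 hs
  have : Finite α := .of_injective M hM
  have hρ : ∀ j, ∃ ρ : Perm β, j ∉ s →
      (∀ t ∈ s, u t (M t) ≤ u t (ρ (M t))) ∧ u j (M j) < u j (ρ (M j)) := by
    intro j
    by_cases hj : j ∈ s
    · exact ⟨1, fun h => absurd hj h⟩
    obtain ⟨W, hW, hWs, hWj⟩ : ∃ W, Injective W ∧ (∀ t ∈ s, u t (M t) ≤ u t (W t)) ∧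
        u j (M j) < u j (W j) := by
      simpa [IsUnimprovableGiven] using h j hj
    obtain ⟨ρ, hρ⟩ := Perm.exists_extending_pair M W hM hW
    exact ⟨ρ, fun _ => ⟨by simpa only [hρ] using hWs, by simpa only [hρ] using hWj⟩⟩
  choose ρ hρ using hρ
  exact not_isParetoOptimal_of_perms hM hi₀ ρ (fun j hj => (hρ j hj).1)
    (fun j hj => (hρ j hj).2) hPO

theorem IsParetoOptimal.exists_isPriorityOptimal [Fintype α] [Finite β] {n : ℕ}
    (hn : Fintype.card α = n) {M : α → β} (hM : Injective M) (hPO : IsParetoOptimal u M) :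
    ∃ π : α ≃ Fin n, IsPriorityOptimal u π M := by
  obtain ⟨π, hπ⟩ := exists_equiv_fin_forall_lt hn (IsUnimprovableGiven u M) fun _ hs =>
    hPO.exists_isUnimprovableGiven hM hs
  exact ⟨π, fun ⟨M', hM', ⟨i, hi⟩, hprio⟩ => hπ i M' hM' (hprio i hi) hi⟩

theorem IsPriorityOptimal.isParetoOptimal {ι : Type*} [LT ι] {π : α → ι} {M : α → β}
    (h : IsPriorityOptimal u π M) : IsParetoOptimal u M :=
  fun ⟨M', hM', hweak, hstrict⟩ => h ⟨M', hM', hstrict, fun _ _ i' _ => hweak i'⟩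

end Matching

theorem paretoOptimal_iff_piOptimal_general (n m : ℕ)
    (u : Fin n → Fin m → ℝ)
    (M : Fin n → Fin m) (hM : Function.Injective M) :
    (¬ ∃ M' : Fin n → Fin m, Function.Injective M' ∧
        (∀ i, u i (M i) ≤ u i (M' i)) ∧ (∃ i, u i (M i) < u i (M' i)))
    ↔ ∃ π : Equiv.Perm (Fin n),
        ¬ ∃ M' : Fin n → Fin m, Function.Injective M' ∧
          (∃ i, u i (M i) < u i (M' i)) ∧
          (∀ i, u i (M i) < u i (M' i) →
            ∀ i', π i' < π i → u i' (M i') ≤ u i' (M' i')) :=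
  ⟨fun hPO => IsParetoOptimal.exists_isPriorityOptimal (Fintype.card_fin n) hM hPO,
    fun ⟨_, hπ⟩ => IsPriorityOptimal.isParetoOptimal hπ⟩

/-- Characterization of Pareto optimal matchings: a matching M (injective map from
agents to goods) is Pareto optimal iff it is π-optimal for some permutation π of the agents. -/
theorem paretoOptimal_iff_piOptimal (n m : ℕ) (hnm : n ≤ m)
    (u : Fin n → Fin m → ℝ) (hu : ∀ i g, 0 ≤ u i g)
    (M : Fin n → Fin m) (hM : Function.Injective M) :
    (¬ ∃ M' : Fin n → Fin m, Function.Injective M' ∧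
        (∀ i, u i (M i) ≤ u i (M' i)) ∧ (∃ i, u i (M i) < u i (M' i)))
    ↔ ∃ π : Equiv.Perm (Fin n),
        ¬ ∃ M' : Fin n → Fin m, Function.Injective M' ∧
          (∃ i, u i (M i) < u i (M' i)) ∧
          (∀ i, u i (M i) < u i (M' i) →
            ∀ i', π i' < π i → u i' (M i') ≤ u i' (M' i')) :=
  paretoOptimal_iff_piOptimal_general n m u M hM
end

section
/- Let N = [n] be agents and G goods with utilities u_i : G → ℝ≥0, and let π : N → [n] be a permutation. Define the rank r(i,g) = |{g' ∈ G : u_i(g') ≤ u_i(g)}|, and assign to each edge (i,g) of the complete bipartite graph between N and G the weight w(i,g) = r(i,g) · m^{n−π(i)}, where m = |G|. Then any matching M maximizing the total weight Σ_{i∈N} w(i, M(i)) is π-optimal. -/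
/-!
Compare `M` with a matching `M'` that `π`-dominates it, and let `i₀` be the agent of highest
priority who strictly improves. Read the weight of a matching as a number in base `m` whose digit
at position `n - 1 - π i` is the rank of agent `i`'s good. Agents of higher priority than `i₀` do
not lose rank, agent `i₀` gains at least one, and each agent of lower priority loses at most
`m - 1` at a strictly smaller position. Those losses add up to less than `m ^ (n - 1 - π i₀)`,
so `M'` has strictly larger weight, contradicting the maximality of `M`.
-/

open Finset Function

section ValueRank

variable {α β : Type*} [Fintype α] [LinearOrder β]

def valueRank (f : α → β) (a : α) : ℕ := #{a' | f a' ≤ f a}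

variable {f : α → β} {a b : α}

theorem valueRank_le_valueRank (h : f a ≤ f b) : valueRank f a ≤ valueRank f b :=
  card_le_card fun _ ha' ↦ by
    simp only [mem_filter, mem_univ, true_and] at ha' ⊢
    exact ha'.trans h

theorem valueRank_lt_valueRank (h : f a < f b) : valueRank f a < valueRank f b := by
  refine card_lt_card ⟨fun _ ha' ↦ ?_, fun hsub ↦ ?_⟩
  · simp only [mem_filter, mem_univ, true_and] at ha' ⊢
    exact ha'.trans h.le
  · have hb : f b ≤ f a := by simpa using hsub (by simp : b ∈ ({a' | f a' ≤ f b} : Finset α))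
    exact hb.not_gt h

theorem valueRank_pos (f : α → β) (a : α) : 0 < valueRank f a :=
  card_pos.2 ⟨a, by simp⟩

theorem valueRank_le_card (f : α → β) (a : α) : valueRank f a ≤ Fintype.card α :=
  card_le_univ _

end ValueRank

theorem sum_pred_mul_pow_lt {m k : ℕ} (hm : 0 < m) {s : Finset ℕ} (hs : ∀ x ∈ s, x < k) :
    ∑ x ∈ s, (m - 1) * m ^ x < m ^ k :=
  calc ∑ x ∈ s, (m - 1) * m ^ x
      ≤ ∑ x ∈ range k, (m - 1) * m ^ x := sum_le_sum_of_subset fun x hx ↦ mem_range.2 (hs x hx)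
    _ = m ^ k - 1 := by rw [← mul_sum, mul_comm, geom_sum_mul_of_one_le hm]
    _ < m ^ k := Nat.sub_lt (Nat.pow_pos hm) one_pos

theorem sum_mul_pow_lt_of_lex {ι : Type*} [Fintype ι] {m : ℕ} (hm : 0 < m) {e : ι → ℕ}
    (he : Injective e) {a b : ι → ℕ} (hab : ∀ i, a i ≤ b i + (m - 1)) {i₀ : ι}
    (hi₀ : a i₀ < b i₀) (hhigh : ∀ i, e i₀ < e i → a i ≤ b i) :
    ∑ i, a i * m ^ e i < ∑ i, b i * m ^ e i := by
  classical
  set low : Finset ι := {i | e i < e i₀}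
  have hpoint : ∀ i, a i * m ^ e i + (if i = i₀ then m ^ e i₀ else 0) ≤
      b i * m ^ e i + (if i ∈ low then (m - 1) * m ^ e i else 0) := by
    intro i
    rcases lt_trichotomy (e i) (e i₀) with hlt | heq | hgt
    · have hne : i ≠ i₀ := by rintro rfl; exact hlt.false
      simp only [low, hne, hlt, mem_filter, mem_univ, true_and, if_true, if_false, add_zero]
      rw [← add_mul]
      exact Nat.mul_le_mul_right _ (hab i)
    · obtain rfl := he heq
      simp only [low, mem_filter, mem_univ, true_and, lt_irrefl, if_true, if_false, add_zero]
      rw [← Nat.succ_mul]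
      exact Nat.mul_le_mul_right _ hi₀
    · have hne : i ≠ i₀ := by rintro rfl; exact hgt.false
      simp only [low, hne, hgt.not_gt, mem_filter, mem_univ, true_and, if_false, add_zero]
      exact Nat.mul_le_mul_right _ (hhigh i hgt)
  have hsum : ∑ i, a i * m ^ e i + m ^ e i₀ ≤
      ∑ i, b i * m ^ e i + ∑ i ∈ low, (m - 1) * m ^ e i := by
    simpa only [sum_add_distrib, sum_ite_eq', mem_univ, if_true, ← sum_filter, filter_mem_eq_inter,
      univ_inter] using sum_le_sum fun i (_ : i ∈ univ) ↦ hpoint i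
  have hlow : ∑ i ∈ low, (m - 1) * m ^ e i < m ^ e i₀ := by
    rw [← sum_image (f := fun x ↦ (m - 1) * m ^ x) fun i _ j _ h ↦ he h]
    exact sum_pred_mul_pow_lt hm fun x hx ↦ by
      obtain ⟨i, hi, rfl⟩ := mem_image.1 hx
      exact (mem_filter.1 hi).2
  omega

theorem maxWeightMatching_piOptimal_general (n m : ℕ)
    (u : Fin n → Fin m → ℝ) (π : Equiv.Perm (Fin n))
    (r : Fin n → Fin m → ℕ)
    (hr : ∀ i g, r i g = (Finset.univ.filter (fun g' => u i g' ≤ u i g)).card)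
    (w : Fin n → Fin m → ℕ)
    (hw : ∀ i g, w i g = r i g * m ^ (n - 1 - (π i : ℕ)))
    (M : Fin n → Fin m)
    (hmax : ∀ M' : Fin n → Fin m, Function.Injective M' →
      ∑ i, w i (M' i) ≤ ∑ i, w i (M i)) :
    ¬ ∃ M' : Fin n → Fin m, Function.Injective M' ∧
      (∃ i, u i (M i) < u i (M' i)) ∧
      (∀ i, u i (M i) < u i (M' i) →
        ∀ i', π i' < π i → u i' (M i') ≤ u i' (M' i')) := by
  rintro ⟨M', hM', ⟨i₀, hi₀⟩, hdom⟩
  have hr' : ∀ i, r i = valueRank (u i) := fun i ↦ funext (hr i)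
  have hm : 0 < m := (M i₀).pos
  have hexp : Injective fun i ↦ n - 1 - (π i : ℕ) := fun i j h ↦ by
    have := (π i).isLt; have := (π j).isLt
    exact π.injective (Fin.ext (by simp only at h; omega))
  refine (hmax M' hM').not_gt ?_
  simp only [hw]
  refine sum_mul_pow_lt_of_lex (i₀ := i₀) hm hexp (fun i ↦ ?_) ?_ fun i hi ↦ ?_
  · have hle : valueRank (u i) (M i) ≤ m := by simpa using valueRank_le_card (u i) (M i)
    have hpos := valueRank_pos (u i) (M' i)
    rw [hr']
    omega
  · simpa only [hr'] using valueRank_lt_valueRank hi₀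
  · have := (π i₀).isLt
    simpa only [hr'] using valueRank_le_valueRank (hdom i₀ hi₀ i (Fin.lt_def.2 (by omega)))

/-- A maximum weight matching with weights w(i,g) = r(i,g) · m^(n − π(i))
(ranks r(i,g) = number of goods valued at most u_i(g), π a priority permutation,
written 0-indexed as m^(n − 1 − π(i))) is π-optimal. -/
theorem maxWeightMatching_piOptimal (n m : ℕ) (hnm : n ≤ m)
    (u : Fin n → Fin m → ℝ) (π : Equiv.Perm (Fin n))
    (r : Fin n → Fin m → ℕ)
    (hr : ∀ i g, r i g = (Finset.univ.filter (fun g' => u i g' ≤ u i g)).card)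
    (w : Fin n → Fin m → ℕ)
    (hw : ∀ i g, w i g = r i g * m ^ (n - 1 - (π i : ℕ)))
    (M : Fin n → Fin m) (hM : Function.Injective M)
    (hmax : ∀ M' : Fin n → Fin m, Function.Injective M' →
      ∑ i, w i (M' i) ≤ ∑ i, w i (M i)) :
    ¬ ∃ M' : Fin n → Fin m, Function.Injective M' ∧
      (∃ i, u i (M i) < u i (M' i)) ∧
      (∀ i, u i (M i) < u i (M' i) →
        ∀ i', π i' < π i → u i' (M i') ≤ u i' (M' i')) :=
  maxWeightMatching_piOptimal_general n m u π r hr w hw M hmax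
end

section
/- Let agents N and goods G have binary utilities u_i : G → {0,1}. Let M' be a matching maximizing the number of agents i with u_i(M'(i)) = 1, and let G' be the set of goods matched by M' to such agents. Then for any matching M there exists a matching M* such that u_i(M*(i)) ≥ u_i(M(i)) for all agents i, and every good matched by M* to an agent who values it is contained in G'. -/
/-!
If the satisfied agents of a matching `M` could not all be matched, in Hall's sense, into the
goods `G'` that a maximum matching `M'` gives to its satisfied agents, some set `A` of them would
like fewer than `#A` goods of `G'`. Letting `A` keep its goods under `M` and the satisfied agents of
`M'` whose goods nobody in `A` likes keep theirs under `M'` then satisfies more agents than `M'`.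
So Hall's theorem matches the satisfied agents of `M` into `G'`. Doing this to a dominating matching
with the most satisfied agents leaves no room for a satisfied agent outside `G'`.
-/

open Finset Function

theorem Set.InjOn.exists_injective_eqOn {α β : Type*} [Fintype α] [Fintype β]
    (hcard : Fintype.card α ≤ Fintype.card β) {s : Finset α} {f : α → β}
    (hf : Set.InjOn f s) : ∃ g : α → β, Injective g ∧ ∀ i ∈ s, g i = f i := by
  classical
  obtain ⟨t, hst, ht⟩ :=
    exists_superset_card_eq (card_image_le.trans (card_le_univ s)) hcard
  obtain ⟨e, he⟩ := exists_equiv_extend_of_card_eq ht.symm hst hf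
  exact ⟨fun i => e i, Subtype.val_injective.comp e.injective, he⟩

namespace Matching

variable {α β : Type*} [Fintype α] (r : α → β → Prop) [DecidableRel r]

def satisfied (M : α → β) : Finset α := univ.filter fun i => r i (M i)

def satisfiedGoods [DecidableEq β] (M : α → β) : Finset β := (satisfied r M).image M

def IsMaxMatching (M : α → β) : Prop :=
  Injective M ∧ ∀ N : α → β, Injective N → #(satisfied r N) ≤ #(satisfied r M)

variable {r}

@[simp]
theorem mem_satisfied {M : α → β} {i : α} : i ∈ satisfied r M ↔ r i (M i) := by
  simp [satisfied]

theorem IsMaxMatching.card_le_of_injOn [Fintype β] {M' N : α → β} (hM' : IsMaxMatching r M')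
    (hcard : Fintype.card α ≤ Fintype.card β) {D : Finset α} (hN : Set.InjOn N D)
    (hsat : ∀ i ∈ D, r i (N i)) : #D ≤ #(satisfied r M') := by
  obtain ⟨N', hN'inj, hN'⟩ := hN.exists_injective_eqOn hcard
  refine (card_le_card fun i hi => ?_).trans (hM'.2 N' hN'inj)
  simpa [hN' i hi] using hsat i hi

theorem IsMaxMatching.card_le_card_biUnion [Fintype β] [DecidableEq β] {M M' : α → β}
    (hM' : IsMaxMatching r M') (hcard : Fintype.card α ≤ Fintype.card β) (hM : Injective M)
    {A : Finset α} (hA : A ⊆ satisfied r M) :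
    #A ≤ #(A.biUnion fun i => (satisfiedGoods r M').filter (r i)) := by
  classical
  set S' := satisfied r M'
  set W := A.biUnion fun i => (satisfiedGoods r M').filter (r i)
  have mem_W : ∀ j ∈ A, ∀ i ∈ S', r j (M' i) → M' i ∈ W := fun j hj i hi hji =>
    mem_biUnion.2 ⟨j, hj, mem_filter.2 ⟨mem_image_of_mem M' hi, hji⟩⟩
  set P := S'.filter fun i => M' i ∈ W
  have hPW : #P ≤ #W := card_le_card_of_injOn M' (fun i hi => (mem_filter.1 hi).2) hM'.1.injOn
  have hdisj : Disjoint A (S' \ P) := disjoint_left.2 fun i hiA hi => by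
    obtain ⟨hiS', hiP⟩ := mem_sdiff.1 hi
    exact hiP (mem_filter.2 ⟨hiS', mem_W i hiA i hiS' (mem_satisfied.1 hiS')⟩)
  have hM_ne : ∀ a ∈ A, ∀ b ∈ S' \ P, M a ≠ M' b := by
    intro a ha b hb hab
    obtain ⟨hbS', hbP⟩ := mem_sdiff.1 hb
    exact hbP <| mem_filter.2 ⟨hbS', mem_W a ha b hbS' (hab ▸ mem_satisfied.1 (hA ha))⟩
  let N : α → β := fun i => if i ∈ A then M i else M' i
  have hNinj : Set.InjOn N ↑(A ∪ (S' \ P)) := by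
    intro a ha b hb hab
    have hbA : b ∉ A → b ∈ S' \ P := (mem_union.1 hb).resolve_left
    have haA : a ∉ A → a ∈ S' \ P := (mem_union.1 ha).resolve_left
    by_cases ha' : a ∈ A <;> by_cases hb' : b ∈ A <;> simp only [N, ha', hb', if_true] at hab
    · exact hM hab
    · exact absurd hab (hM_ne a ha' b (hbA hb'))
    · exact absurd hab.symm (hM_ne b hb' a (haA ha'))
    · exact hM'.1 hab
  have hNsat : ∀ i ∈ A ∪ (S' \ P), r i (N i) := by
    intro i hi
    by_cases hiA : i ∈ A
    · simpa [N, hiA] using hA hiA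
    · simpa [N, hiA] using mem_satisfied.1 (mem_sdiff.1 ((mem_union.1 hi).resolve_left hiA)).1
  have hD : #A + #(S' \ P) ≤ #S' :=
    card_union_of_disjoint hdisj ▸ hM'.card_le_of_injOn hcard hNinj hNsat
  have hS'P : #(S' \ P) + #P = #S' := card_sdiff_add_card_eq_card (filter_subset _ _)
  omega

theorem IsMaxMatching.exists_injective_satisfied_mem_satisfiedGoods [Fintype β] [DecidableEq β]
    {M M' : α → β} (hM' : IsMaxMatching r M') (hcard : Fintype.card α ≤ Fintype.card β)
    (hM : Injective M) :
    ∃ N : α → β, Injective N ∧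
      ∀ i ∈ satisfied r M, r i (N i) ∧ N i ∈ satisfiedGoods r M' := by
  classical
  set S := satisfied r M
  let t : S → Finset β := fun i => (satisfiedGoods r M').filter (r i)
  have hall : ∀ s : Finset S, #s ≤ #(s.biUnion t) := by
    intro s
    have hs : s.map (Embedding.subtype _) ⊆ S := fun i hi => by
      obtain ⟨j, -, rfl⟩ := mem_map.1 hi
      exact j.2
    have hbiUnion : (s.map (Embedding.subtype _)).biUnion
        (fun i => (satisfiedGoods r M').filter (r i)) = s.biUnion t := by
      ext; simp [t]
    simpa [hbiUnion] using hM'.card_le_card_biUnion hcard hM hs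
  obtain ⟨f, hfinj, hft⟩ := (all_card_le_biUnion_card_iff_exists_injective t).1 hall
  have hFinj : Set.InjOn (fun i => if h : i ∈ S then f ⟨i, h⟩ else M i) S := by
    intro a ha b hb hab
    rw [mem_coe] at ha hb
    simp only [ha, hb, dif_pos] at hab
    exact congrArg Subtype.val (hfinj hab)
  obtain ⟨N, hNinj, hN⟩ := hFinj.exists_injective_eqOn hcard
  refine ⟨N, hNinj, fun i hi => ?_⟩
  have := hft ⟨i, hi⟩
  simp only [t, mem_filter] at this
  simpa [hN i hi, hi] using this.symm

theorem IsMaxMatching.exists_satisfied_subset_satisfiedGoods_subset [Fintype β] [DecidableEq β]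
    {M M' : α → β} (hM' : IsMaxMatching r M') (hcard : Fintype.card α ≤ Fintype.card β)
    (hM : Injective M) :
    ∃ N : α → β, Injective N ∧ satisfied r M ⊆ satisfied r N ∧
      satisfiedGoods r N ⊆ satisfiedGoods r M' := by
  classical
  obtain ⟨M₁, hM₁, hM₁max⟩ := exists_max_image
    (univ.filter fun N : α → β => Injective N ∧ satisfied r M ⊆ satisfied r N)
    (fun N => #(satisfied r N)) ⟨M, by simp [hM]⟩
  obtain ⟨hM₁inj, hMM₁⟩ := (mem_filter.1 hM₁).2
  obtain ⟨N, hNinj, hN⟩ := hM'.exists_injective_satisfied_mem_satisfiedGoods hcard hM₁inj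
  have hM₁N : satisfied r M₁ ⊆ satisfied r N := fun i hi => mem_satisfied.2 (hN i hi).1
  refine ⟨N, hNinj, hMM₁.trans hM₁N, ?_⟩
  rintro _ hg
  obtain ⟨i, hi, rfl⟩ := mem_image.1 hg
  by_cases hiM₁ : i ∈ satisfied r M₁
  · exact (hN i hiM₁).2
  have hlt : #(satisfied r M₁) < #(satisfied r N) :=
    card_lt_card ⟨hM₁N, fun h => hiM₁ (h hi)⟩
  have hle := hM₁max N (by simp [hNinj, hMM₁.trans hM₁N])
  omega

end Matching

open Matching in
/-- Under binary valuations, if M' is a maximum matching (maximizing the number of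
satisfied agents) and G' is the set of goods it assigns to satisfied agents, then any
matching M is weakly Pareto dominated by a matching M* whose valued goods all lie in G'. -/
theorem binary_matching_dominated_within_maximum (n m : ℕ) (hnm : n ≤ m)
    (u : Fin n → Fin m → ℕ) (hbin : ∀ i g, u i g = 0 ∨ u i g = 1)
    (M' : Fin n → Fin m) (hM' : Function.Injective M')
    (hmax : ∀ M'' : Fin n → Fin m, Function.Injective M'' →
      (Finset.univ.filter (fun i => u i (M'' i) = 1)).card ≤
        (Finset.univ.filter (fun i => u i (M' i) = 1)).card)
    (G' : Finset (Fin m))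
    (hG' : G' = (Finset.univ.filter (fun i => u i (M' i) = 1)).image M') :
    ∀ M : Fin n → Fin m, Function.Injective M →
      ∃ Mstar : Fin n → Fin m, Function.Injective Mstar ∧
        (∀ i, u i (M i) ≤ u i (Mstar i)) ∧
        ∀ i, u i (Mstar i) = 1 → Mstar i ∈ G' := by
  intro M hM
  have hmaximum : IsMaxMatching (fun i g => u i g = 1) M' := ⟨hM', hmax⟩
  obtain ⟨Mstar, hinj, hsat, hgoods⟩ :=
    hmaximum.exists_satisfied_subset_satisfiedGoods_subset (by simpa using hnm) hM
  refine ⟨Mstar, hinj, fun i => ?_, fun i hi => hG' ▸ hgoods (mem_image_of_mem Mstar ?_)⟩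
  · rcases hbin i (M i) with h | h
    · simp [h]
    · rw [h, show u i (Mstar i) = 1 from mem_satisfied.1 (hsat (mem_satisfied.2 h))]
  · exact mem_satisfied.2 hi
end

section
/- Consider the repeated matching instance with n = m = 3 agents and goods where the utility of agent i for good j is given by the matrix U = [[5,2,1],[3,3,2],[2,5,1]], over T = 2 rounds. Then the maximum bottleneck value at round 1 is 2, the maximum bottleneck value at round 2 is 6, and no sequence of two matchings simultaneously achieves bottleneck value 2 at round 1 and bottleneck value 6 at round 2. In particular, no anytime optimal sequence exists. -/
/-- The 3×3 utility matrix of the counterexample instance. -/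
def U6 : Fin 3 → Fin 3 → ℝ := ![![5, 2, 1], ![3, 3, 2], ![2, 5, 1]]

/-- Bottleneck value after one round under matching σ. -/
noncomputable def bott1 (σ : Equiv.Perm (Fin 3)) : ℝ :=
  min (min (U6 0 (σ 0)) (U6 1 (σ 1))) (U6 2 (σ 2))

/-- Bottleneck value after two rounds under matchings σ, τ. -/
noncomputable def bott2 (σ τ : Equiv.Perm (Fin 3)) : ℝ :=
  min (min (U6 0 (σ 0) + U6 0 (τ 0)) (U6 1 (σ 1) + U6 1 (τ 1)))
    (U6 2 (σ 2) + U6 2 (τ 2))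

/-!
Good 2 is worth 1 to agents 0 and 2 and 2 to agent 1. Some agent receives it in the first
round, so OPT(1) ≤ 2, with equality only if agent 1 gets good 2. Agent 1 values every good at
most 3, so OPT(2) ≤ 6, with equality only if agent 1 gets value 3 in both rounds. The two
requirements on agent 1's first good are incompatible.
-/

lemma U6_apply_two_le_two (i : Fin 3) : U6 i 2 ≤ 2 := by
  fin_cases i <;> norm_num [U6, Matrix.cons_val_two]

lemma U6_apply_two_of_ne_one {i : Fin 3} (hi : i ≠ 1) : U6 i 2 = 1 := by
  fin_cases i <;> simp_all [U6]

lemma U6_one_apply_le_three (j : Fin 3) : U6 1 j ≤ 3 := by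
  fin_cases j <;> norm_num [U6, Matrix.cons_val_two]

lemma bott1_le (σ : Equiv.Perm (Fin 3)) (i : Fin 3) : bott1 σ ≤ U6 i (σ i) := by
  fin_cases i <;> simp [bott1]

lemma bott2_le (σ τ : Equiv.Perm (Fin 3)) (i : Fin 3) :
    bott2 σ τ ≤ U6 i (σ i) + U6 i (τ i) := by
  fin_cases i <;> simp [bott2]

lemma bott1_le_U6_symm_two (σ : Equiv.Perm (Fin 3)) : bott1 σ ≤ U6 (σ.symm 2) 2 := by
  simpa using bott1_le σ (σ.symm 2)

lemma bott1_le_two (σ : Equiv.Perm (Fin 3)) : bott1 σ ≤ 2 :=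
  (bott1_le_U6_symm_two σ).trans (U6_apply_two_le_two _)

lemma apply_one_eq_two_of_bott1_eq_two {σ : Equiv.Perm (Fin 3)} (h : bott1 σ = 2) : σ 1 = 2 := by
  by_contra hσ
  have hholder : σ.symm 2 ≠ 1 := fun h' => hσ (by rw [← h', Equiv.apply_symm_apply])
  have := bott1_le_U6_symm_two σ
  rw [U6_apply_two_of_ne_one hholder] at this
  linarith

lemma bott2_le_six (σ τ : Equiv.Perm (Fin 3)) : bott2 σ τ ≤ 6 := by
  linarith [bott2_le σ τ 1, U6_one_apply_le_three (σ 1), U6_one_apply_le_three (τ 1)]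

lemma bott2_le_five_of_apply_one_eq_two {σ : Equiv.Perm (Fin 3)} (hσ : σ 1 = 2)
    (τ : Equiv.Perm (Fin 3)) : bott2 σ τ ≤ 5 := by
  have h := bott2_le σ τ 1
  rw [hσ, show U6 1 2 = 2 by norm_num [U6, Matrix.cons_val_two]] at h
  linarith [U6_one_apply_le_three (τ 1)]

lemma bott1_swap_one_two : bott1 (Equiv.swap 1 2) = 2 := by
  norm_num +decide [bott1, U6, Equiv.swap_apply_def, Matrix.cons_val_two]

lemma bott2_one_swap_mul_swap : bott2 1 (Equiv.swap 1 2 * Equiv.swap 0 1) = 6 := by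
  norm_num +decide [bott2, U6, Equiv.swap_apply_def, Matrix.cons_val_two]

/-- In the instance with utilities U = [[5,2,1],[3,3,2],[2,5,1]] over T = 2 rounds,
OPT(1) = 2, OPT(2) = 6, and no sequence of two matchings achieves both simultaneously;
in particular no anytime optimal sequence exists. -/
theorem no_anytime_optimal_counterexample :
    IsGreatest {x : ℝ | ∃ σ : Equiv.Perm (Fin 3), x = bott1 σ} 2 ∧
    IsGreatest {x : ℝ | ∃ σ τ : Equiv.Perm (Fin 3), x = bott2 σ τ} 6 ∧
    ¬ ∃ σ τ : Equiv.Perm (Fin 3), bott1 σ = 2 ∧ bott2 σ τ = 6 := by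
  refine ⟨⟨⟨_, bott1_swap_one_two.symm⟩, ?_⟩, ⟨⟨_, _, bott2_one_swap_mul_swap.symm⟩, ?_⟩, ?_⟩
  · rintro _ ⟨σ, rfl⟩
    exact bott1_le_two σ
  · rintro _ ⟨σ, τ, rfl⟩
    exact bott2_le_six σ τ
  · rintro ⟨σ, τ, h1, h2⟩
    have := bott2_le_five_of_apply_one_eq_two (apply_one_eq_two_of_bott1_eq_two h1) τ
    linarith
end

section
/- Let n agents have identical valuations u : G → ℝ≥0 over m ≥ n goods, and suppose T = kn for a positive integer k. Let G* be a set of the n most valuable goods. Then the allocation giving each agent exactly k copies of each good in G* (so each agent receives total value k·Σ_{g∈G*} u(g)) maximizes the minimum total value among all allocations in which each agent receives T goods and each good is used at most T times. That is, for any non-negative integer matrix A with row sums equal to T and column sums at most T, min_i Σ_j A_{ij} u(g_j) ≤ k·Σ_{g∈G*} u(g). -/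
/-! The total value of an allocation is `∑ⱼ cⱼ u(gⱼ)`, where the column sums `cⱼ ∈ [0, T]` add up
to `nT`. Shifting `u` by a threshold `t` separating `G*` from the other goods, the terms outside
`G*` become nonpositive and those inside are at most `T (u(g) - t)`, so the total value is at most
`T ∑_{g ∈ G*} u(g) = n · k ∑_{g ∈ G*} u(g)`. Some agent therefore gets at most the average
`k ∑_{g ∈ G*} u(g)`. -/

open Finset

theorem Finset.sum_mul_le_mul_sum_of_threshold {ι R : Type*} [Fintype ι]
    [CommRing R] [LinearOrder R] [IsStrictOrderedRing R]
    (S : Finset ι) (c u : ι → R) (T t : R)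
    (hc_nonneg : ∀ j ∉ S, 0 ≤ c j) (hc_le : ∀ j ∈ S, c j ≤ T) (hc_sum : ∑ j, c j = #S * T)
    (hu_out : ∀ j ∉ S, u j ≤ t) (hu_in : ∀ j ∈ S, t ≤ u j) :
    ∑ j, c j * u j ≤ T * ∑ j ∈ S, u j := by
  classical
  have hshift : ∑ j, c j * (u j - t) ≤ ∑ j ∈ S, T * (u j - t) := by
    rw [← sum_add_sum_compl S]
    have hin : ∑ j ∈ S, c j * (u j - t) ≤ ∑ j ∈ S, T * (u j - t) :=
      sum_le_sum fun j hj => mul_le_mul_of_nonneg_right (hc_le j hj) (sub_nonneg.2 (hu_in j hj))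
    have hout : ∑ j ∈ Sᶜ, c j * (u j - t) ≤ 0 :=
      sum_nonpos fun j hj => mul_nonpos_of_nonneg_of_nonpos (hc_nonneg j (mem_compl.1 hj))
        (sub_nonpos.2 (hu_out j (mem_compl.1 hj)))
    linarith
  calc ∑ j, c j * u j = ∑ j, c j * (u j - t) + (∑ j, c j) * t := by
        simp only [mul_sub, sum_sub_distrib, sum_mul, sub_add_cancel]
    _ ≤ ∑ j ∈ S, T * (u j - t) + #S * T * t := by rw [hc_sum]; linarith
    _ = T * ∑ j ∈ S, u j := by simp only [mul_sub, sum_sub_distrib, sum_const, ← mul_sum]; ring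

theorem Matrix.sum_sum_mul_eq_sum_colSum_mul {ι κ R : Type*} [Fintype ι] [Fintype κ]
    [CommSemiring R] (A : Matrix ι κ ℕ) (u : κ → R) :
    ∑ i, ∑ j, (A i j : R) * u j = ∑ j, ((∑ i, A i j : ℕ) : R) * u j := by
  rw [sum_comm]
  simp only [Nat.cast_sum, sum_mul]

theorem identical_valuations_optimal_allocation_general (n m k : ℕ)
    (hn : 0 < n)
    (u : Fin m → ℝ)
    (Gstar : Finset (Fin m)) (hcard : Gstar.card = n)
    (htop : ∀ g ∈ Gstar, ∀ g' ∉ Gstar, u g' ≤ u g)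
    (T : ℕ) (hT : T = k * n)
    (A : Matrix (Fin n) (Fin m) ℕ)
    (hrow : ∀ i, ∑ j, A i j = T) (hcol : ∀ j, ∑ i, A i j ≤ T) :
    ∃ i : Fin n, ∑ j, (A i j : ℝ) * u j ≤ (k : ℝ) * ∑ g ∈ Gstar, u g := by
  obtain ⟨g₀, hg₀, hg₀_min⟩ := Gstar.exists_min_image u (card_pos.1 (hcard ▸ hn))
  have hcol_total : ∑ j, ((∑ i, A i j : ℕ) : ℝ) = #Gstar * T := by
    rw [← Nat.cast_sum, sum_comm]
    simp [hrow, hcard]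
  have htotal : ∑ i, ∑ j, (A i j : ℝ) * u j ≤ ∑ _i : Fin n, (k : ℝ) * ∑ g ∈ Gstar, u g := by
    rw [Matrix.sum_sum_mul_eq_sum_colSum_mul, sum_const, card_univ, Fintype.card_fin,
      nsmul_eq_mul, ← mul_assoc, ← Nat.cast_mul, mul_comm n, ← hT]
    exact Gstar.sum_mul_le_mul_sum_of_threshold _ u T (u g₀) (fun _ _ => by positivity)
      (fun j _ => by exact_mod_cast hcol j) hcol_total
      (fun j hj => htop g₀ hg₀ j hj) hg₀_min
  obtain ⟨i, -, hi⟩ := exists_le_of_sum_le (univ_nonempty_iff.2 ⟨⟨0, hn⟩⟩) htotal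
  exact ⟨i, hi⟩

/-- With identical valuations and T = k·n rounds, giving every agent k copies of each of
the n most valuable goods is optimal: any feasible allocation (row sums T, column sums ≤ T)
has some agent with value at most k · Σ_{g ∈ G*} u(g). -/
theorem identical_valuations_optimal_allocation (n m k : ℕ)
    (hn : 0 < n) (hnm : n ≤ m) (hk : 0 < k)
    (u : Fin m → ℝ) (hu : ∀ g, 0 ≤ u g)
    (Gstar : Finset (Fin m)) (hcard : Gstar.card = n)
    (htop : ∀ g ∈ Gstar, ∀ g' ∉ Gstar, u g' ≤ u g)
    (T : ℕ) (hT : T = k * n)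
    (A : Matrix (Fin n) (Fin m) ℕ)
    (hrow : ∀ i, ∑ j, A i j = T) (hcol : ∀ j, ∑ i, A i j ≤ T) :
    ∃ i : Fin n, ∑ j, (A i j : ℝ) * u j ≤ (k : ℝ) * ∑ g ∈ Gstar, u g :=
  identical_valuations_optimal_allocation_general n m k hn u Gstar hcard htop T hT A hrow hcol
end

section
/- Let α₁, ..., α_d be positive reals summing to 1. Consider the greedy process that, at each round t = 1, 2, ..., T, selects an index k minimizing (n_k + 1)/α_k (where n_k is the number of times index k has been selected so far) and increments n_k. Then after every round t and for every index k, the count n_k satisfies n_k ≥ α_k · t − 1. -/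
/-!
The greedy rule keeps the ratios balanced: by induction on the rounds, every count satisfies
`n_j / α_j ≤ (n_k + 1) / α_k` for all `j, k`, since `j` is only incremented when `(n_j + 1) / α_j`
is minimal. Multiplying by `α_j` and summing over `j`, with `∑ n_j = t` and `∑ α_j = 1`, gives
`t ≤ (n_k + 1) / α_k`.
-/

namespace GreedySelection

variable {ι : Type*} [DecidableEq ι] (counts : ℕ → ι → ℕ) (sel : ℕ → ι)

theorem counts_succ_apply
    (hstep : ∀ t, counts (t + 1) = Function.update (counts t) (sel t) (counts t (sel t) + 1))
    (t : ℕ) (j : ι) : counts (t + 1) j = counts t j + if j = sel t then 1 else 0 := by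
  rw [hstep t]
  split_ifs with h
  · subst h; simp
  · simp [Function.update_of_ne h]

theorem sum_counts [Fintype ι] (h0 : ∀ k, counts 0 k = 0)
    (hstep : ∀ t, counts (t + 1) = Function.update (counts t) (sel t) (counts t (sel t) + 1))
    (t : ℕ) : ∑ j, counts t j = t := by
  induction t with
  | zero => simp [h0]
  | succ t ih =>
    simp only [counts_succ_apply counts sel hstep, Finset.sum_add_distrib, ih,
      Finset.sum_ite_eq', Finset.mem_univ, if_true]

theorem counts_div_le (α : ι → ℝ) (hα : ∀ k, 0 < α k) (h0 : ∀ k, counts 0 k = 0)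
    (hstep : ∀ t, counts (t + 1) = Function.update (counts t) (sel t) (counts t (sel t) + 1))
    (hmin : ∀ t k, ((counts t (sel t) : ℝ) + 1) / α (sel t) ≤ ((counts t k : ℝ) + 1) / α k)
    (t : ℕ) (j k : ι) : (counts t j : ℝ) / α j ≤ ((counts t k : ℝ) + 1) / α k := by
  induction t with
  | zero => simp only [h0, CharP.cast_eq_zero, zero_div, zero_add]; exact (one_div_pos.2 (hα k)).le
  | succ t ih =>
    have hk : ((counts t k : ℝ) + 1) / α k ≤ ((counts (t + 1) k : ℝ) + 1) / α k := by
      gcongr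
      · exact (hα k).le
      · rw [counts_succ_apply counts sel hstep]; omega
    by_cases hj : j = sel t
    · subst hj
      by_cases hjk : sel t = k
      · subst hjk; gcongr; exacts [(hα _).le, by linarith]
      · rw [counts_succ_apply counts sel hstep, if_pos rfl]
        push_cast
        exact (hmin t k).trans hk
    · rw [counts_succ_apply counts sel hstep, if_neg hj, add_zero]
      exact ih.trans hk

end GreedySelection

/-- Invariant of the greedy selection process: if at each round the index k minimizing
(n_k + 1)/α_k is selected and incremented, then after every round t each count satisfies
n_k ≥ α_k·t − 1. -/
theorem greedy_selection_invariant (d : ℕ) (α : Fin d → ℝ)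
    (hα : ∀ k, 0 < α k) (hsum : ∑ k, α k = 1)
    (counts : ℕ → Fin d → ℕ) (sel : ℕ → Fin d)
    (h0 : ∀ k, counts 0 k = 0)
    (hstep : ∀ t, counts (t + 1) =
      Function.update (counts t) (sel t) (counts t (sel t) + 1))
    (hmin : ∀ t k, ((counts t (sel t) : ℝ) + 1) / α (sel t) ≤
      ((counts t k : ℝ) + 1) / α k) :
    ∀ (t : ℕ) (k : Fin d), α k * t - 1 ≤ counts t k := by
  intro t k
  set c := ((counts t k : ℝ) + 1) / α k
  have hbound : ∀ j, (counts t j : ℝ) ≤ α j * c := fun j => by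
    rw [mul_comm, ← div_le_iff₀ (hα j)]
    exact GreedySelection.counts_div_le counts sel α hα h0 hstep hmin t j k
  have ht : (t : ℝ) ≤ c := calc
    (t : ℝ) = ∑ j, (counts t j : ℝ) := by exact_mod_cast (GreedySelection.sum_counts counts sel h0 hstep t).symm
    _ ≤ ∑ j, α j * c := Finset.sum_le_sum fun j _ => hbound j
    _ = c := by rw [← Finset.sum_mul, hsum, one_mul]
  rw [le_div_iff₀ (hα k)] at ht
  linarith
end

section
/- For any instance with n = 2 agents, m ≥ 2 goods, and non-negative utilities, and any horizon T, there exists a sequence of matchings S = (M¹, ..., M^T) such that for every t ∈ [T], the bottleneck value b^t(S) = min_i Σ_{s≤t} u_i(M^s(i)) equals OPT(t), the maximum bottleneck value achievable over all sequences of t matchings. -/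
/-!
Let `g` maximise agent `1`'s utility and let `gA`, `gB` be the best goods other than `g` for
agents `0` and `1`; write `a = u 0 g`, `a' = u 0 gA`, `b = u 1 g`, `b' = u 1 gB`. Every
matching is dominated coordinatewise by `(a, b')` (agent `0` receives `g`) or by `(a', b)`
(it does not), and both are realised by matchings. So only the number `k` of rounds in which
agent `0` receives `g` matters, and the best bottleneck after `t` rounds is the maximum over
`k` of the minimum of an increasing and a decreasing affine function of `k`. Outside degenerate
cases, where one option is always optimal, it is attained at
`k = ⌊((b - a') t + (a - a')) / ((a - a') + (b - b'))⌋`, which is `0` at `t = 0` and grows by at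
most one per round, so a single sequence attains the optimum at every `t`.
-/

open Finset

section TwoOptions

variable (a a' b b' : ℝ)

/-- Bottleneck value after `t` rounds in which the option with payoffs `(a, b')` is taken `k`
times and the option with payoffs `(a', b)` the other `t - k` times. -/
def twoOptionValue (t k : ℕ) : ℝ :=
  min (k * a + (t - k) * a') (k * b' + (t - k) * b)

noncomputable def balancedCount (t : ℕ) : ℕ :=
  ⌊((b - a') * t + (a - a')) / (a - a' + (b - b'))⌋₊

variable {a a' b b'}

lemma twoOptionValue_le_zero (h : a ≤ a' ∨ b ≤ a') (hb : b' ≤ b) (t K : ℕ) :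
    twoOptionValue a a' b b' t K ≤ twoOptionValue a a' b b' t 0 := by
  have hK : (0 : ℝ) ≤ K := K.cast_nonneg
  have ht : (0 : ℝ) ≤ t := t.cast_nonneg
  simp only [twoOptionValue, Nat.cast_zero, zero_mul, zero_add, sub_zero]
  rcases h with h | h
  · exact min_le_min (by nlinarith) (by nlinarith)
  · exact (min_le_right _ _).trans (le_min (by nlinarith) (by nlinarith))

lemma twoOptionValue_le_self (ha : a' ≤ a) (h : a ≤ b' ∨ b ≤ b') {t K : ℕ} (hK : K ≤ t) :
    twoOptionValue a a' b b' t K ≤ twoOptionValue a a' b b' t t := by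
  have hKt : (K : ℝ) ≤ t := by exact_mod_cast hK
  have hK₀ : (0 : ℝ) ≤ K := K.cast_nonneg
  simp only [twoOptionValue, sub_self, zero_mul, add_zero]
  rcases h with h | h
  · exact (min_le_left _ _).trans (le_min (by nlinarith) (by nlinarith))
  · exact min_le_min (by nlinarith) (by nlinarith)

/-- The first coordinate of `twoOptionValue` increases and the second decreases in the count;
`h₁` says the first at `k - 1` is below the second at `k`, and `h₂` that the second at `k + 1`
is below the first at `k`, so no other count does better than `k`. -/
lemma twoOptionValue_le_of_bracket (ha : a' ≤ a) (hb : b' ≤ b) {t k : ℕ}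
    (h₁ : k * (a - a' + (b - b')) ≤ (b - a') * t + (a - a'))
    (h₂ : (b - a') * t + (a - a') ≤ (k + 1) * (a - a' + (b - b'))) (K : ℕ) :
    twoOptionValue a a' b b' t K ≤ twoOptionValue a a' b b' t k := by
  unfold twoOptionValue
  rcases lt_trichotomy K k with hKk | rfl | hkK
  · have : (K : ℝ) + 1 ≤ k := by exact_mod_cast hKk
    refine (min_le_left _ _).trans (le_min ?_ ?_)
    · nlinarith [mul_nonneg (sub_nonneg.2 ha) (by linarith : (0 : ℝ) ≤ k - K)]
    · nlinarith [mul_nonneg (sub_nonneg.2 ha) (by linarith : (0 : ℝ) ≤ k - 1 - K)]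
  · exact le_rfl
  · have : (k : ℝ) + 1 ≤ K := by exact_mod_cast hkK
    refine (min_le_right _ _).trans (le_min ?_ ?_)
    · nlinarith [mul_nonneg (sub_nonneg.2 hb) (by linarith : (0 : ℝ) ≤ K - k - 1)]
    · nlinarith [mul_nonneg (sub_nonneg.2 hb) (by linarith : (0 : ℝ) ≤ K - k)]

lemma Nat.floor_add_eq_or_eq_add_one {R : Type*} [Semiring R] [LinearOrder R]
    [IsStrictOrderedRing R] [FloorSemiring R] {x c : R} (hx : 0 ≤ x) (hc₀ : 0 ≤ c) (hc₁ : c ≤ 1) :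
    ⌊x + c⌋₊ = ⌊x⌋₊ ∨ ⌊x + c⌋₊ = ⌊x⌋₊ + 1 := by
  have hlo : ⌊x⌋₊ ≤ ⌊x + c⌋₊ := Nat.floor_le_floor (le_add_of_nonneg_right hc₀)
  have hhi : ⌊x + c⌋₊ ≤ ⌊x⌋₊ + 1 := Nat.floor_add_one hx ▸ Nat.floor_le_floor (add_le_add_right hc₁ x)
  omega

lemma Nat.count_lt_succ_eq {k : ℕ → ℕ} (h₀ : k 0 = 0)
    (hstep : ∀ s, k (s + 1) = k s ∨ k (s + 1) = k s + 1) (t : ℕ) :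
    Nat.count (fun s => k s < k (s + 1)) t = k t := by
  induction t with
  | zero => rw [Nat.count_zero, h₀]
  | succ t ih => rcases hstep t with h | h <;> simp [Nat.count_succ, ih, h]

lemma balancedCount_zero (ha : a' ≤ a) (hb : b' < b) : balancedCount a a' b b' 0 = 0 := by
  rw [balancedCount, Nat.floor_eq_zero, div_lt_one (by linarith)]
  simpa using hb

lemma balancedCount_bracket (ha : a' ≤ a) (hb : b' < b) (hab : a' ≤ b) (t : ℕ) :
    balancedCount a a' b b' t * (a - a' + (b - b')) ≤ (b - a') * t + (a - a') ∧
      (b - a') * t + (a - a') ≤ (balancedCount a a' b b' t + 1) * (a - a' + (b - b')) := by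
  have hd : 0 < a - a' + (b - b') := by linarith
  have hx : 0 ≤ ((b - a') * t + (a - a')) / (a - a' + (b - b')) :=
    div_nonneg (by nlinarith [t.cast_nonneg (α := ℝ)]) hd.le
  exact ⟨(le_div_iff₀ hd).1 (Nat.floor_le hx), ((div_lt_iff₀ hd).1 (Nat.lt_floor_add_one _)).le⟩

lemma balancedCount_succ (ha : a' ≤ a) (hb : b' < b) (hab : a' ≤ b) (hba : b' ≤ a) (t : ℕ) :
    balancedCount a a' b b' (t + 1) = balancedCount a a' b b' t ∨
      balancedCount a a' b b' (t + 1) = balancedCount a a' b b' t + 1 := by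
  have hd : 0 < a - a' + (b - b') := by linarith
  have hsplit : ((b - a') * ↑(t + 1) + (a - a')) / (a - a' + (b - b')) =
      ((b - a') * t + (a - a')) / (a - a' + (b - b')) + (b - a') / (a - a' + (b - b')) := by
    push_cast; ring
  rw [balancedCount, balancedCount, hsplit]
  exact Nat.floor_add_eq_or_eq_add_one
    (div_nonneg (by nlinarith [t.cast_nonneg (α := ℝ)]) hd.le)
    (div_nonneg (by linarith) hd.le) ((div_le_one hd).2 (by linarith))

theorem exists_anytime_optimal_twoOption (hb : b' ≤ b) :
    ∃ σ : ℕ → Bool, ∀ t K, K ≤ t →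
      twoOptionValue a a' b b' t K ≤ twoOptionValue a a' b b' t (Nat.count (σ ·) t) := by
  by_cases h₀ : a ≤ a' ∨ b ≤ a'
  · exact ⟨fun _ => false, fun t K _ => by simpa using twoOptionValue_le_zero h₀ hb t K⟩
  push Not at h₀
  by_cases h₁ : a ≤ b' ∨ b ≤ b'
  · exact ⟨fun _ => true, fun t K hK => by simpa using twoOptionValue_le_self h₀.1.le h₁ hK⟩
  push Not at h₁
  refine ⟨fun s => decide (balancedCount a a' b b' s < balancedCount a a' b b' (s + 1)),
    fun t K _ => ?_⟩
  have hcount := Nat.count_lt_succ_eq (balancedCount_zero h₀.1.le h₁.2)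
    (balancedCount_succ h₀.1.le h₁.2 h₀.2.le h₁.1.le) t
  obtain ⟨hlo, hhi⟩ := balancedCount_bracket h₀.1.le h₁.2 h₀.2.le t
  simp only [decide_eq_true_eq, hcount]
  exact twoOptionValue_le_of_bracket h₀.1.le hb hlo (by exact_mod_cast hhi) K

end TwoOptions

section Matchings

variable {α : Type*}

lemma sum_range_ite_eq (p : ℕ → Prop) [DecidablePred p] (x y : ℝ) (t : ℕ) :
    ∑ s ∈ range t, (if p s then x else y) = Nat.count p t * x + (t - Nat.count p t) * y := by
  induction t with
  | zero => simp
  | succ t ih =>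
    rw [sum_range_succ, ih, Nat.count_succ]
    split_ifs <;> push_cast <;> ring

lemma exists_max_ne {β : Type*} [Finite α] [Nontrivial α] [LinearOrder β] (f : α → β) (g : α) :
    ∃ x ≠ g, ∀ y ≠ g, f y ≤ f x := by
  obtain ⟨y, hy⟩ := exists_ne g
  have : Nonempty {y // y ≠ g} := ⟨⟨y, hy⟩⟩
  obtain ⟨⟨x, hx⟩, hmax⟩ := Finite.exists_max fun y : {y // y ≠ g} => f y
  exact ⟨x, hx, fun y hy => hmax ⟨y, hy⟩⟩

def twoOptionMatchings (g gA gB : α) (σ : ℕ → Bool) (s : ℕ) : Fin 2 → α :=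
  if σ s then ![g, gB] else ![gA, g]

variable {g gA gB : α}

lemma twoOptionMatchings_injective (hA : gA ≠ g) (hB : gB ≠ g) (σ : ℕ → Bool) (s : ℕ) :
    Function.Injective (twoOptionMatchings g gA gB σ s) := by
  unfold twoOptionMatchings
  split_ifs
  · exact fun i j => by fin_cases i <;> fin_cases j <;> simp [hB.symm, hB]
  · exact fun i j => by fin_cases i <;> fin_cases j <;> simp [hA, hA.symm]

variable (u : Fin 2 → α → ℝ)

lemma bottleneck_twoOptionMatchings (σ : ℕ → Bool) (t : ℕ) :
    min (∑ s ∈ range t, u 0 (twoOptionMatchings g gA gB σ s 0))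
        (∑ s ∈ range t, u 1 (twoOptionMatchings g gA gB σ s 1)) =
      twoOptionValue (u 0 g) (u 0 gA) (u 1 g) (u 1 gB) t (Nat.count (σ ·) t) := by
  rw [twoOptionValue, ← sum_range_ite_eq, ← sum_range_ite_eq]
  congr 1 <;> refine sum_congr rfl fun s _ => ?_ <;> unfold twoOptionMatchings <;>
    split_ifs <;> rfl

lemma bottleneck_le_twoOptionValue [DecidableEq α] (hg : ∀ h, u 1 h ≤ u 1 g)
    (hA : ∀ h ≠ g, u 0 h ≤ u 0 gA) (hB : ∀ h ≠ g, u 1 h ≤ u 1 gB) {S : ℕ → Fin 2 → α}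
    (hS : ∀ s, Function.Injective (S s)) (t : ℕ) :
    min (∑ s ∈ range t, u 0 (S s 0)) (∑ s ∈ range t, u 1 (S s 1)) ≤
      twoOptionValue (u 0 g) (u 0 gA) (u 1 g) (u 1 gB) t (Nat.count (S · 0 = g) t) := by
  rw [twoOptionValue, ← sum_range_ite_eq, ← sum_range_ite_eq]
  refine min_le_min (sum_le_sum fun s _ => ?_) (sum_le_sum fun s _ => ?_)
  · split_ifs with h
    · rw [h]
    · exact hA _ h
  · split_ifs with h
    · exact hB _ fun h1 => zero_ne_one (hS s (h.trans h1.symm))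
    · exact hg _

end Matchings

theorem anytime_optimal_exists_two_agents_general (m : ℕ) (hm : 2 ≤ m)
    (u : Fin 2 → Fin m → ℝ) (T : ℕ) :
    ∃ S : ℕ → Fin 2 → Fin m, (∀ s, Function.Injective (S s)) ∧
      ∀ t ≤ T,
        IsGreatest
          {x : ℝ | ∃ S' : ℕ → Fin 2 → Fin m, (∀ s, Function.Injective (S' s)) ∧
            x = min (∑ s ∈ Finset.range t, u 0 (S' s 0))
                  (∑ s ∈ Finset.range t, u 1 (S' s 1))}
          (min (∑ s ∈ Finset.range t, u 0 (S s 0))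
            (∑ s ∈ Finset.range t, u 1 (S s 1))) := by
  have : Nontrivial (Fin m) := Fin.nontrivial_iff_two_le.2 hm
  obtain ⟨g, hg⟩ := Finite.exists_max (u 1)
  obtain ⟨gA, hgA, hA⟩ := exists_max_ne (u 0) g
  obtain ⟨gB, hgB, hB⟩ := exists_max_ne (u 1) g
  obtain ⟨σ, hσ⟩ := exists_anytime_optimal_twoOption (a := u 0 g) (a' := u 0 gA) (hg gB)
  have hinj := twoOptionMatchings_injective hgA hgB σ
  refine ⟨twoOptionMatchings g gA gB σ, hinj, fun t _ => ⟨⟨_, hinj, rfl⟩, ?_⟩⟩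
  rintro x ⟨S, hS, rfl⟩
  rw [bottleneck_twoOptionMatchings]
  exact (bottleneck_le_twoOptionValue u hg hA hB hS t).trans (hσ t _ (Nat.count_le _))

/-- For two agents there always exists an anytime optimal sequence of matchings:
a sequence S whose bottleneck value at every round t ≤ T is the greatest bottleneck
value achievable by any sequence of t matchings. -/
theorem anytime_optimal_exists_two_agents (m : ℕ) (hm : 2 ≤ m)
    (u : Fin 2 → Fin m → ℝ) (hu : ∀ i g, 0 ≤ u i g) (T : ℕ) :
    ∃ S : ℕ → Fin 2 → Fin m, (∀ s, Function.Injective (S s)) ∧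
      ∀ t ≤ T,
        IsGreatest
          {x : ℝ | ∃ S' : ℕ → Fin 2 → Fin m, (∀ s, Function.Injective (S' s)) ∧
            x = min (∑ s ∈ Finset.range t, u 0 (S' s 0))
                  (∑ s ∈ Finset.range t, u 1 (S' s 1))}
          (min (∑ s ∈ Finset.range t, u 0 (S s 0))
            (∑ s ∈ Finset.range t, u 1 (S s 1))) :=
  anytime_optimal_exists_two_agents_general m hm u T
end

section
/- Let n agents with identical valuation u : G → ℝ≥0 be matched over T rounds by the following greedy rule: at each round, agents pick goods one at a time in increasing order of their cumulative value so far, each choosing a most valuable remaining good. Let Δ be the difference between the largest value of a good and the n-th largest value of a good. Then for every t ∈ [T], the resulting sequence S satisfies b^t(S) ≥ OPT(t) − Δ. -/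
/-!
A greedy round hands out the `n` most valuable goods, so it collects at least as much total
value as any matching; summed over the first `t` rounds the greedy agents therefore own at least
as much as the agents of any other sequence, whose poorest agent owns at most their average.
On the other hand every greedy pick lies between the `n`-th largest and the largest value, and
an agent who is strictly behind never picks after one who is ahead, so greedy cumulative values
never drift apart by more than `Δ`: the poorest greedy agent is within `Δ` of the greedy average.
-/

open Finset

lemma Finset.sum_le_sum_of_card_eq_of_forall_sdiff_le {α β : Type*} [DecidableEq α]
    [AddCommMonoid β] [LinearOrder β] [IsOrderedCancelAddMonoid β] {f : α → β}
    {s t : Finset α} (hcard : #s = #t) (hle : ∀ a ∈ s \ t, ∀ b ∈ t \ s, f a ≤ f b) :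
    ∑ a ∈ s, f a ≤ ∑ a ∈ t, f a := by
  rw [← sum_sdiff_le_sum_sdiff]
  have hcard' : #(s \ t) = #(t \ s) := card_sdiff_comm hcard
  rcases (s \ t).eq_empty_or_nonempty with hempty | hne
  · have : t \ s = ∅ := card_eq_zero.mp (by rw [← hcard', hempty, card_empty])
    simp [hempty, this]
  · calc ∑ a ∈ s \ t, f a ≤ #(s \ t) • (s \ t).sup' hne f :=
          sum_le_card_nsmul _ _ _ fun a ha => le_sup' f ha
      _ = #(t \ s) • (s \ t).sup' hne f := by rw [hcard']
      _ ≤ ∑ b ∈ t \ s, f b :=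
          card_nsmul_le_sum _ _ _ fun b hb => sup'_le hne f fun a ha => hle a ha b hb

lemma Finset.inf'_univ_le_inf'_univ_add_of_sum_le {ι β : Type*} [Fintype ι]
    [AddCommMonoid β] [LinearOrder β] [IsOrderedCancelAddMonoid β]
    (hne : (univ : Finset ι).Nonempty) {f g : ι → β} {c : β} (hsum : ∑ i, f i ≤ ∑ i, g i)
    (hspread : ∀ i j, g i ≤ g j + c) :
    univ.inf' hne f ≤ univ.inf' hne g + c := by
  obtain ⟨j, -, hj⟩ := exists_mem_eq_inf' hne g
  rw [hj]
  by_contra! hlt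
  have hgf : ∀ i ∈ univ, g i < f i := fun i _ =>
    ((hspread i j).trans_lt hlt).trans_le (inf'_le f (mem_univ i))
  exact (sum_lt_sum_of_nonempty hne hgf).not_ge hsum

lemma sum_range_le_sum_range_add_of_behind_picks_ge {ι : Type*} {v : ℕ → ι → ℝ} {a b : ℝ}
    (hlo : ∀ s i, a ≤ v s i) (hhi : ∀ s i, v s i ≤ b)
    (hbehind : ∀ s i j,
      ∑ r ∈ range s, v r i < ∑ r ∈ range s, v r j → v s j ≤ v s i) :
    ∀ t i j, ∑ r ∈ range t, v r i ≤ ∑ r ∈ range t, v r j + (b - a) := by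
  intro t
  induction t with
  | zero => intro i j; simpa using (hlo 0 i).trans (hhi 0 i)
  | succ t ih =>
    intro i j
    rw [sum_range_succ, sum_range_succ]
    rcases lt_or_ge (∑ r ∈ range t, v r j) (∑ r ∈ range t, v r i) with hji | hij
    · linarith [ih i j, hbehind t j i hji]
    · linarith [hhi t i, hlo t j]

section TopGoods

variable {ι α : Type*} {u : α → ℝ} {M M' : ι → α}

def TakesTopGoods (u : α → ℝ) (M : ι → α) : Prop :=
  ∀ i g, (∀ i', M i' ≠ g) → u g ≤ u (M i)

lemma TakesTopGoods.sum_le [Fintype ι] (hM : TakesTopGoods u M) (hinj : M.Injective)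
    (hinj' : M'.Injective) : ∑ i, u (M' i) ≤ ∑ i, u (M i) := by
  classical
  rw [← sum_image fun _ _ _ _ h => hinj' h, ← sum_image fun _ _ _ _ h => hinj h]
  refine sum_le_sum_of_card_eq_of_forall_sdiff_le ?_ fun g hg g' hg' => ?_
  · rw [card_image_of_injective _ hinj, card_image_of_injective _ hinj']
  · obtain ⟨i, -, rfl⟩ := mem_image.mp (mem_sdiff.mp hg').1
    refine hM i g fun i' hi' => (mem_sdiff.mp hg).2 ?_
    exact hi' ▸ mem_image_of_mem M (mem_univ i')

/-- The other agents hold fewer than `#K` goods, so some good of `K` is either `M i` itself or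
unassigned. -/
lemma TakesTopGoods.exists_mem_le [Fintype ι] [DecidableEq α] (hM : TakesTopGoods u M)
    {K : Finset α} (hK : Fintype.card ι ≤ #K) (i : ι) : ∃ g ∈ K, u g ≤ u (M i) := by
  have hothers : #((univ.image M).erase (M i)) < #K :=
    calc #((univ.image M).erase (M i)) < #(univ.image M) :=
          card_erase_lt_of_mem (mem_image_of_mem M (mem_univ i))
      _ ≤ Fintype.card ι := card_image_le
      _ ≤ #K := hK
  obtain ⟨g, hgK, hg⟩ := exists_mem_notMem_of_card_lt_card hothers
  refine ⟨g, hgK, ?_⟩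
  by_cases hgi : g = M i
  · rw [hgi]
  · refine hM i g fun i' hi' => hg (mem_erase.mpr ⟨hgi, ?_⟩)
    exact hi' ▸ mem_image_of_mem M (mem_univ i')

end TopGoods

/-- Identical valuations: the greedy sequence (each round, agents pick most valuable
remaining goods in increasing order of cumulative value) achieves, at every round t ≤ T,
a bottleneck value within Δ of optimal, where Δ is the gap between the most valuable
good and the n-th most valuable good (the least valuable good in a top-n set G*). -/
theorem greedy_identical_anytime_additive (n m : ℕ) (hn : 0 < n) (hnm : n ≤ m)
    (u : Fin m → ℝ)
    (Gstar : Finset (Fin m)) (hcard : Gstar.card = n)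
    (T : ℕ) (S : ℕ → Fin n → Fin m)
    (hSinj : ∀ s, Function.Injective (S s))
    (hpick : ∀ (s : ℕ) (i : Fin n) (g : Fin m), (∀ i', S s i' ≠ g) → u g ≤ u (S s i))
    (horder : ∀ (s : ℕ) (i j : Fin n),
      (∑ r ∈ Finset.range s, u (S r i)) < (∑ r ∈ Finset.range s, u (S r j)) →
      u (S s j) ≤ u (S s i)) :
    ∀ t ≤ T, ∀ S' : ℕ → Fin n → Fin m, (∀ s, Function.Injective (S' s)) →
      Finset.univ.inf' ⟨⟨0, hn⟩, Finset.mem_univ _⟩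
          (fun i => ∑ s ∈ Finset.range t, u (S' s i)) ≤
        Finset.univ.inf' ⟨⟨0, hn⟩, Finset.mem_univ _⟩
            (fun i => ∑ s ∈ Finset.range t, u (S s i)) +
          (Finset.univ.sup' ⟨⟨0, lt_of_lt_of_le hn hnm⟩, Finset.mem_univ _⟩ u -
            Gstar.inf' (Finset.card_pos.mp (by rw [hcard]; exact hn)) u) := by
  intro t _ S' hS'inj
  have hpick_ge : ∀ s i, Gstar.inf' (card_pos.mp (by rw [hcard]; exact hn)) u ≤ u (S s i) := by
    intro s i
    obtain ⟨g, hg, hle⟩ :=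
      TakesTopGoods.exists_mem_le (K := Gstar) (hpick s) (by simp [hcard]) i
    exact (inf'_le u hg).trans hle
  refine inf'_univ_le_inf'_univ_add_of_sum_le _ ?_
    (sum_range_le_sum_range_add_of_behind_picks_ge hpick_ge
      (fun s i => le_sup' u (mem_univ (S s i))) horder t)
  rw [sum_comm, sum_comm (γ := Fin n)]
  exact sum_le_sum fun s _ => TakesTopGoods.sum_le (hpick s) (hSinj s) (hS'inj s)
end

section
/- For identical valuations, the average cumulative value upper-bounds the optimal bottleneck value: for any instance with n agents sharing valuation u, any t, and any sequence S produced by a rule that in each round assigns the n most valuable goods (one per agent), (1/n)·Σ_{i∈N} v_i^t(S) ≥ OPT(t). -/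
open Finset

theorem Finset.inf'_univ_le_average {ι : Type*} [Fintype ι] (h : (univ : Finset ι).Nonempty)
    (f : ι → ℝ) : univ.inf' h f ≤ (1 / (Fintype.card ι : ℝ)) * ∑ i, f i := by
  have hcard : (0 : ℝ) < Fintype.card ι := by exact_mod_cast card_univ (α := ι) ▸ h.card_pos
  rw [one_div, inv_mul_eq_div, le_div_iff₀ hcard, mul_comm, ← nsmul_eq_mul]
  exact card_nsmul_le_sum _ _ _ fun i hi => inf'_le f hi

theorem Finset.sum_sum_le_of_forall_sum_le {ι κ : Type*} [Fintype ι] (T : Finset κ)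
    {f g : κ → ι → ℝ} (hfg : ∀ s ∈ T, ∑ i, f s i ≤ ∑ i, g s i) :
    ∑ i, ∑ s ∈ T, f s i ≤ ∑ i, ∑ s ∈ T, g s i := by
  rw [sum_comm, sum_comm (s := univ)]
  exact sum_le_sum hfg

theorem average_bounds_opt_identical_general (n m : ℕ) (hn : 0 < n)
    (u : Fin m → ℝ)
    (S : ℕ → Fin n → Fin m)
    (htop : ∀ (s : ℕ) (M' : Fin n → Fin m), Function.Injective M' →
      ∑ i, u (M' i) ≤ ∑ i, u (S s i)) :
    ∀ (t : ℕ) (S' : ℕ → Fin n → Fin m), (∀ s, Function.Injective (S' s)) →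
      Finset.univ.inf' ⟨⟨0, hn⟩, Finset.mem_univ _⟩
          (fun i => ∑ s ∈ Finset.range t, u (S' s i)) ≤
        (1 / (n : ℝ)) * ∑ i, ∑ s ∈ Finset.range t, u (S s i) := by
  intro t S' hS'
  calc _ ≤ (1 / (n : ℝ)) * ∑ i, ∑ s ∈ range t, u (S' s i) := by
        simpa using inf'_univ_le_average _ (fun i => ∑ s ∈ range t, u (S' s i))
    _ ≤ (1 / (n : ℝ)) * ∑ i, ∑ s ∈ range t, u (S s i) := by
        gcongr ?_ * ?_
        exact sum_sum_le_of_forall_sum_le _ fun s _ => htop s (S' s) (hS' s)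

/-- Identical valuations: for any sequence S that each round assigns a set of n goods of
maximum total value, the average cumulative value upper-bounds the optimal bottleneck
value at every round: (1/n)·Σ_i v_i^t(S) ≥ b^t(S') for every sequence S'. -/
theorem average_bounds_opt_identical (n m : ℕ) (hn : 0 < n) (hnm : n ≤ m)
    (u : Fin m → ℝ) (hu : ∀ g, 0 ≤ u g)
    (S : ℕ → Fin n → Fin m) (hSinj : ∀ s, Function.Injective (S s))
    (htop : ∀ (s : ℕ) (M' : Fin n → Fin m), Function.Injective M' →
      ∑ i, u (M' i) ≤ ∑ i, u (S s i)) :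
    ∀ (t : ℕ) (S' : ℕ → Fin n → Fin m), (∀ s, Function.Injective (S' s)) →
      Finset.univ.inf' ⟨⟨0, hn⟩, Finset.mem_univ _⟩
          (fun i => ∑ s ∈ Finset.range t, u (S' s i)) ≤
        (1 / (n : ℝ)) * ∑ i, ∑ s ∈ Finset.range t, u (S s i) :=
  average_bounds_opt_identical_general n m hn u S htop
end

section
/- Consider bipartite maximum weight matching with weights w(i,g) = r(i,g)·m^{n−π(i)} where r(i,g) = |{g' ∈ G : u_i(g') ≤ u_i(g)}| ∈ [1,m]. For any two matchings M₀ and M with the property that some agent i satisfies r(i, M₀(i)) > r(i, M(i)) and all agents i' with π(i') ≤ π(i) satisfy r(i', M₀(i')) ≥ r(i', M(i')), the total weight of M₀ strictly exceeds that of M: the gain over agents with priority at most π(i) is at least m^{n−π(i)}, while the loss over agents with priority greater than π(i) is at most m^{n−π(i)} − 1. -/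
/-!
The weights `m ^ (n - 1 - π i')` are distinct base-`m` places, higher priority meaning a higher
place. Agent `i` gains at least one unit at its place, while every lower-priority agent, whose rank
lies in `[1, m]`, loses at most one digit `m - 1` at its own lower place; these losses add up to at
most the all-`(m - 1)` numeral `m ^ (n - 1 - π i) - 1`.
-/

open Finset

theorem sum_mul_pow_le_pow_sub_one {ι R : Type*} [CommRing R] [LinearOrder R]
    [IsStrictOrderedRing R] {s : Finset ι} {e : ι → ℕ} {c : ι → R} {b : R} {k : ℕ}
    (hb : 1 ≤ b) (he : Set.InjOn e s) (hek : ∀ x ∈ s, e x < k) (hc : ∀ x ∈ s, c x ≤ b - 1) :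
    ∑ x ∈ s, c x * b ^ e x ≤ b ^ k - 1 := by
  have hb0 : 0 ≤ b - 1 := sub_nonneg.mpr hb
  calc ∑ x ∈ s, c x * b ^ e x
      ≤ ∑ x ∈ s, (b - 1) * b ^ e x :=
        sum_le_sum fun x hx => mul_le_mul_of_nonneg_right (hc x hx) (by positivity)
    _ = ∑ j ∈ s.image e, (b - 1) * b ^ j := (sum_image (f := fun j => (b - 1) * b ^ j) he).symm
    _ ≤ ∑ j ∈ range k, (b - 1) * b ^ j := by
        refine sum_le_sum_of_subset_of_nonneg ?_ fun j _ _ => by positivity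
        simpa [subset_iff] using hek
    _ = b ^ k - 1 := by rw [← mul_sum, mul_comm, geom_sum_mul]

theorem le_sum_mul_of_one_le {ι R : Type*} [CommSemiring R] [PartialOrder R]
    [IsOrderedRing R] {s : Finset ι} {d w : ι → R} {x₀ : ι} (hx₀ : x₀ ∈ s) (hd : 1 ≤ d x₀)
    (hd_nonneg : ∀ x ∈ s, 0 ≤ d x) (hw : ∀ x ∈ s, 0 ≤ w x) :
    w x₀ ≤ ∑ x ∈ s, d x * w x :=
  (le_mul_of_one_le_left (hw x₀ hx₀) hd).trans
    (single_le_sum (f := fun x => d x * w x)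
      (fun x hx => mul_nonneg (hd_nonneg x hx) (hw x hx)) hx₀)

theorem Fin.injective_sub_one_sub_val (n : ℕ) :
    Function.Injective fun x : Fin n => n - 1 - (x : ℕ) :=
  fun a b hab => Fin.ext (by have := a.isLt; have := b.isLt; simp only at hab; omega)

theorem weight_separation_general (n m : ℕ)
    (u : Fin n → Fin m → ℝ) (π : Equiv.Perm (Fin n))
    (r : Fin n → Fin m → ℕ)
    (hr : ∀ i g, r i g = (Finset.univ.filter (fun g' => u i g' ≤ u i g)).card)
    (M₀ M : Fin n → Fin m)
    (i : Fin n) (hi : r i (M i) < r i (M₀ i))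
    (hprio : ∀ i', π i' ≤ π i → r i' (M i') ≤ r i' (M₀ i')) :
    ((m : ℤ) ^ (n - 1 - (π i : ℕ)) ≤
      ∑ i' ∈ Finset.univ.filter (fun i' => π i' ≤ π i),
        ((r i' (M₀ i') : ℤ) - (r i' (M i') : ℤ)) * (m : ℤ) ^ (n - 1 - (π i' : ℕ))) ∧
    (∑ i' ∈ Finset.univ.filter (fun i' => π i < π i'),
        ((r i' (M i') : ℤ) - (r i' (M₀ i') : ℤ)) * (m : ℤ) ^ (n - 1 - (π i' : ℕ)) ≤
      (m : ℤ) ^ (n - 1 - (π i : ℕ)) - 1) ∧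
    (∑ i', r i' (M i') * m ^ (n - 1 - (π i' : ℕ)) <
      ∑ i', r i' (M₀ i') * m ^ (n - 1 - (π i' : ℕ))) := by
  have hr_pos : ∀ i' g, 1 ≤ r i' g := fun i' g => hr i' g ▸ card_pos.mpr ⟨g, by simp⟩
  have hr_le : ∀ i' g, r i' g ≤ m := fun i' g => hr i' g ▸ (card_filter_le _ _).trans_eq (by simp)
  have hm : (1 : ℤ) ≤ m := by exact_mod_cast (hr_pos i (M i)).trans (hr_le i (M i))
  have gain := le_sum_mul_of_one_le (w := fun i' => (m : ℤ) ^ (n - 1 - (π i' : ℕ)))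
    (d := fun i' => (r i' (M₀ i') : ℤ) - r i' (M i')) (by simp : i ∈ univ.filter (π · ≤ π i))
    (by omega) (fun i' hi' => by have := hprio i' (by simpa using hi'); omega)
    (fun _ _ => by positivity)
  have loss := sum_mul_pow_le_pow_sub_one (s := univ.filter (π i < π ·))
    (e := fun i' => n - 1 - (π i' : ℕ)) (k := n - 1 - (π i : ℕ))
    (c := fun i' => (r i' (M i') : ℤ) - r i' (M₀ i')) hm
    ((Fin.injective_sub_one_sub_val n).comp π.injective).injOn
    (fun i' hi' => by
      have := (π i').isLt; have : (π i : ℕ) < π i' := by simpa using hi'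
      omega)
    (fun i' _ => by have := hr_le i' (M i'); have := hr_pos i' (M₀ i'); omega)
  refine ⟨gain, loss, ?_⟩
  have hsplit := sum_filter_add_sum_filter_not univ (π · ≤ π i)
    (fun i' => ((r i' (M₀ i') : ℤ) - r i' (M i')) * (m : ℤ) ^ (n - 1 - (π i' : ℕ)))
  simp only [not_le, sub_mul, sum_sub_distrib] at hsplit gain loss
  zify
  linarith

/-- Weight-separation for the priority weights w(i,g) = r(i,g)·m^(n−π(i)) (written
0-indexed as m^(n−1−π(i))): if M₀ improves agent i's rank and weakly improves all agents
with priority at most π(i), then the gain over those agents is at least m^(n−1−π(i)), the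
loss over lower-priority agents is at most m^(n−1−π(i)) − 1, and hence M₀ has strictly
larger total weight than M. -/
theorem weight_separation (n m : ℕ) (hnm : n ≤ m)
    (u : Fin n → Fin m → ℝ) (π : Equiv.Perm (Fin n))
    (r : Fin n → Fin m → ℕ)
    (hr : ∀ i g, r i g = (Finset.univ.filter (fun g' => u i g' ≤ u i g)).card)
    (M₀ M : Fin n → Fin m)
    (hM₀ : Function.Injective M₀) (hM : Function.Injective M)
    (i : Fin n) (hi : r i (M i) < r i (M₀ i))
    (hprio : ∀ i', π i' ≤ π i → r i' (M i') ≤ r i' (M₀ i')) :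
    ((m : ℤ) ^ (n - 1 - (π i : ℕ)) ≤
      ∑ i' ∈ Finset.univ.filter (fun i' => π i' ≤ π i),
        ((r i' (M₀ i') : ℤ) - (r i' (M i') : ℤ)) * (m : ℤ) ^ (n - 1 - (π i' : ℕ))) ∧
    (∑ i' ∈ Finset.univ.filter (fun i' => π i < π i'),
        ((r i' (M i') : ℤ) - (r i' (M₀ i') : ℤ)) * (m : ℤ) ^ (n - 1 - (π i' : ℕ)) ≤
      (m : ℤ) ^ (n - 1 - (π i : ℕ)) - 1) ∧
    (∑ i', r i' (M i') * m ^ (n - 1 - (π i' : ℕ)) <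
      ∑ i', r i' (M₀ i') * m ^ (n - 1 - (π i' : ℕ))) :=
  weight_separation_general n m u π r hr M₀ M i hi hprio
end

section
/- Let u_i : G → {0,1} be binary utilities for agents N = [n] over goods G, and suppose a matching M is Pareto optimal and some matching M' satisfies more agents than M (i.e., |{i : u_i(M'(i)) = 1}| > |{i : u_i(M(i)) = 1}|) is impossible; that is, every Pareto optimal matching under binary utilities satisfies the maximum possible number of agents. -/
/-!
If `M'` satisfies more agents than `M`, repair `M'` step by step: for an agent `j` satisfied
by `M` but not by `M'`, exchange the goods `M j` and `M' j` in `M'`. This satisfies `j`, costs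
at most the one agent who held `M j`, and makes `M'` agree with `M` in one more place. When no
such `j` is left, `M'` satisfies every agent that `M` satisfies and still strictly more agents,
which under binary utilities makes `M'` a Pareto improvement of `M`.
-/

open Finset Function

section

variable {ι α : Type*} [Fintype ι]

def satisfiedAgents (u : ι → α → ℕ) (M : ι → α) : Finset ι :=
  univ.filter fun i => u i (M i) = 1

def disagreements [DecidableEq α] (M M' : ι → α) : Finset ι :=
  univ.filter fun i => M' i ≠ M i

def IsParetoImprovement (u : ι → α → ℕ) (M M' : ι → α) : Prop :=
  (∀ i, u i (M i) ≤ u i (M' i)) ∧ ∃ i, u i (M i) < u i (M' i)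

theorem isParetoImprovement_of_satisfiedAgents_ssubset {u : ι → α → ℕ}
    (hbin : ∀ i g, u i g = 0 ∨ u i g = 1) {M M' : ι → α}
    (hss : satisfiedAgents u M ⊂ satisfiedAgents u M') :
    IsParetoImprovement u M M' := by
  have mem_iff {N : ι → α} {i : ι} : i ∈ satisfiedAgents u N ↔ u i (N i) = 1 := by
    simp [satisfiedAgents]
  constructor
  · intro i
    rcases hbin i (M i) with h0 | h1
    · omega
    · exact h1 ▸ (mem_iff.mp (hss.subset (mem_iff.mpr h1))).ge
  · obtain ⟨i, hi', hi⟩ := exists_of_ssubset hss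
    refine ⟨i, ?_⟩
    rw [mem_iff] at hi hi'
    rcases hbin i (M i) with h0 | h1 <;> omega

theorem card_satisfiedAgents_le_swap [DecidableEq α] {u : ι → α → ℕ} {M : ι → α}
    (hM : Injective M) {j : ι} {g : α} (hg : u j g = 1) (hj : u j (M j) ≠ 1) :
    #(satisfiedAgents u M) ≤ #(satisfiedAgents u (Equiv.swap g (M j) ∘ M)) := by
  -- The agent who held `g` is replaced by `j`; every other satisfied agent keeps its good.
  refine card_le_card_of_injOn (fun i => if M i = g then j else i) ?_ ?_
  · intro i hi
    simp only [satisfiedAgents, coe_filter, mem_univ, true_and, Set.mem_ofPred_eq,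
      comp_apply] at hi ⊢
    split_ifs with hig
    · rwa [Equiv.swap_apply_right]
    · have hij : i ≠ j := by rintro rfl; exact hj hi
      rwa [Equiv.swap_apply_of_ne_of_ne hig (hM.ne hij)]
  · intro i hi i' hi' h
    simp only [satisfiedAgents, coe_filter, mem_univ, true_and, Set.mem_ofPred_eq] at hi hi' h
    split_ifs at h with hig hi'g hi'g
    · exact hM (hig.trans hi'g.symm)
    · subst h; exact absurd hi' hj
    · subst h; exact absurd hi hj
    · exact h

theorem disagreements_swap_ssubset [DecidableEq α] {M M' : ι → α} (hM : Injective M)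
    (hM' : Injective M') {j : ι} (hj : M' j ≠ M j) :
    disagreements M (Equiv.swap (M j) (M' j) ∘ M') ⊂ disagreements M M' := by
  classical
  have mem_iff {N : ι → α} {i : ι} : i ∈ disagreements M N ↔ N i ≠ M i := by
    simp [disagreements]
  refine (subset_erase.mpr ⟨fun i hi => ?_, fun hj' => ?_⟩).trans_ssubset
    (erase_ssubset (mem_iff.mpr hj))
  · rw [mem_iff] at hi ⊢
    intro hi'
    have hij : i ≠ j := by
      rintro rfl
      exact hi (by simp [Equiv.swap_apply_right])
    rw [comp_apply, Equiv.swap_apply_of_ne_of_ne (hi' ▸ hM.ne hij) (hM'.ne hij), hi'] at hi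
    exact hi rfl
  · exact mem_iff.mp hj' (by simp [Equiv.swap_apply_right])

theorem exists_isParetoImprovement_of_card_satisfiedAgents_lt {u : ι → α → ℕ}
    (hbin : ∀ i g, u i g = 0 ∨ u i g = 1) {M : ι → α} (hM : Injective M)
    {M' : ι → α} (hM' : Injective M')
    (hlt : #(satisfiedAgents u M) < #(satisfiedAgents u M')) :
    ∃ M'' : ι → α, Injective M'' ∧ IsParetoImprovement u M M'' := by
  classical
  induction hd : #(disagreements M M') using Nat.strong_induction_on generalizing M' with
  | _ d ih =>
    by_cases hsub : satisfiedAgents u M ⊆ satisfiedAgents u M'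
    · exact ⟨M', hM', isParetoImprovement_of_satisfiedAgents_ssubset hbin
        (ssubset_of_subset_of_ne hsub (ne_of_apply_ne card hlt.ne))⟩
    obtain ⟨j, hjM, hjM'⟩ := not_subset.mp hsub
    simp only [satisfiedAgents, mem_filter, mem_univ, true_and] at hjM hjM'
    have hj : M' j ≠ M j := fun h => hjM' (h ▸ hjM)
    exact ih _ (hd ▸ card_lt_card (disagreements_swap_ssubset hM hM' hj))
      ((Equiv.injective _).comp hM')
      (hlt.trans_le (card_satisfiedAgents_le_swap hM' hjM hjM')) rfl

end

theorem binary_paretoOptimal_is_maximum_general (n m : ℕ)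
    (u : Fin n → Fin m → ℕ) (hbin : ∀ i g, u i g = 0 ∨ u i g = 1)
    (M : Fin n → Fin m) (hM : Function.Injective M)
    (hPO : ¬ ∃ M' : Fin n → Fin m, Function.Injective M' ∧
      (∀ i, u i (M i) ≤ u i (M' i)) ∧ ∃ i, u i (M i) < u i (M' i)) :
    ∀ M' : Fin n → Fin m, Function.Injective M' →
      (Finset.univ.filter (fun i => u i (M' i) = 1)).card ≤
        (Finset.univ.filter (fun i => u i (M i) = 1)).card := by
  intro M' hM'
  by_contra hlt
  exact hPO (exists_isParetoImprovement_of_card_satisfiedAgents_lt hbin hM hM' (not_le.mp hlt))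

/-- Under binary valuations, every Pareto optimal matching satisfies the maximum possible
number of agents: no matching satisfies strictly more agents. -/
theorem binary_paretoOptimal_is_maximum (n m : ℕ) (hnm : n ≤ m)
    (u : Fin n → Fin m → ℕ) (hbin : ∀ i g, u i g = 0 ∨ u i g = 1)
    (M : Fin n → Fin m) (hM : Function.Injective M)
    (hPO : ¬ ∃ M' : Fin n → Fin m, Function.Injective M' ∧
      (∀ i, u i (M i) ≤ u i (M' i)) ∧ ∃ i, u i (M i) < u i (M' i)) :
    ∀ M' : Fin n → Fin m, Function.Injective M' →
      (Finset.univ.filter (fun i => u i (M' i) = 1)).card ≤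
        (Finset.univ.filter (fun i => u i (M i) = 1)).card :=
  binary_paretoOptimal_is_maximum_general n m u hbin M hM hPO
end

section
/- Let α₁, ..., α_d > 0 sum to 1 and let M₁, ..., M_d be n×n permutation matrices with B = Σ_k α_k M_k. Let u_i : [n] → ℝ≥0 and suppose Σ_j B_{ij} u_i(j) ≥ b for all i. Run the greedy selection (at each round pick k minimizing (n_k+1)/α_k and increment n_k) for T rounds, letting n_{k,t} be the count of index k after round t. Then for every round t and agent i, Σ_k n_{k,t} · u_i(M_k(i)) ≥ t·b − d·max_j u_i(j), where M_k(i) denotes the column matched to row i in permutation matrix M_k. -/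
/-!
The greedy rule keeps the schedule balanced: at every round, `n_j / α_j ≤ (n_k + 1) / α_k`
for all `j, k`, since the index just incremented had the smallest ratio `(n + 1) / α`.
Multiplying by `α_j` and summing over `j` gives `t ≤ (n_k + 1) / α_k`, i.e. `n_k ≥ α_k t - 1`.
Weighting by agent `i`'s utilities, the `α_k t` part recovers `t` times the fractional value
`Σ_j B_ij u_i(j) ≥ b`, while the `-1` terms cost at most `d · max_j u_i(j)`.
-/

open Finset

namespace GreedySchedule

variable {ι : Type*} [DecidableEq ι] {counts : ℕ → ι → ℕ} {sel : ℕ → ι}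

theorem counts_succ
    (hstep : ∀ t, counts (t + 1) = Function.update (counts t) (sel t) (counts t (sel t) + 1))
    (t : ℕ) : counts (t + 1) = counts t + Pi.single (sel t) 1 := by
  ext k
  by_cases hk : k = sel t <;> simp [hstep, hk]

theorem sum_counts [Fintype ι] (h0 : ∀ k, counts 0 k = 0)
    (hstep : ∀ t, counts (t + 1) = Function.update (counts t) (sel t) (counts t (sel t) + 1))
    (t : ℕ) : ∑ k, counts t k = t := by
  induction t with
  | zero => simp [h0]
  | succ t ih => simp [counts_succ hstep, sum_add_distrib, ih]

theorem counts_div_le_succ_div {α : ι → ℝ} (hα : ∀ k, 0 < α k) (h0 : ∀ k, counts 0 k = 0)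
    (hstep : ∀ t, counts (t + 1) = Function.update (counts t) (sel t) (counts t (sel t) + 1))
    (hmin : ∀ t k, ((counts t (sel t) : ℝ) + 1) / α (sel t) ≤ ((counts t k : ℝ) + 1) / α k)
    (t : ℕ) (j k : ι) : (counts t j : ℝ) / α j ≤ ((counts t k : ℝ) + 1) / α k := by
  induction t generalizing j with
  | zero =>
    have := hα k
    simp only [h0, CharP.cast_eq_zero, zero_div, zero_add]
    positivity
  | succ t ih =>
    have hk : ((counts t k : ℝ) + 1) / α k ≤ ((counts (t + 1) k : ℝ) + 1) / α k := by
      gcongr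
      · exact (hα k).le
      · simp [counts_succ hstep]
    by_cases hj : j = sel t
    · subst hj
      simpa [counts_succ hstep] using (hmin t k).trans hk
    · simpa [counts_succ hstep, hj] using (ih j).trans hk

theorem mul_sub_one_le_counts [Fintype ι] {α : ι → ℝ} (hα : ∀ k, 0 < α k)
    (hsum : ∑ k, α k = 1) (h0 : ∀ k, counts 0 k = 0)
    (hstep : ∀ t, counts (t + 1) = Function.update (counts t) (sel t) (counts t (sel t) + 1))
    (hmin : ∀ t k, ((counts t (sel t) : ℝ) + 1) / α (sel t) ≤ ((counts t k : ℝ) + 1) / α k)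
    (t : ℕ) (k : ι) : α k * t - 1 ≤ counts t k := by
  have ht : (t : ℝ) ≤ ((counts t k : ℝ) + 1) / α k :=
    calc (t : ℝ) = ∑ j, (counts t j : ℝ) := by exact_mod_cast (sum_counts h0 hstep t).symm
      _ = ∑ j, α j * ((counts t j : ℝ) / α j) := by
        refine sum_congr rfl fun j _ => ?_
        rw [mul_div_cancel₀ _ (hα j).ne']
      _ ≤ ∑ j, α j * (((counts t k : ℝ) + 1) / α k) := by
        refine sum_le_sum fun j _ => mul_le_mul_of_nonneg_left ?_ (hα j).le
        exact counts_div_le_succ_div hα h0 hstep hmin t j k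
      _ = ((counts t k : ℝ) + 1) / α k := by rw [← sum_mul, hsum, one_mul]
  rw [le_div_iff₀ (hα k)] at ht
  linarith

end GreedySchedule

theorem sum_mul_eq_sum_comp {ι n m : Type*} [Fintype ι] [Fintype m] [DecidableEq m]
    (α : ι → ℝ) (f : ι → n → m) (B : Matrix n m ℝ)
    (hB : ∀ i j, B i j = ∑ k, α k * (if f k i = j then 1 else 0)) (i : n) (v : m → ℝ) :
    ∑ j, B i j * v j = ∑ k, α k * v (f k i) := by
  simp only [hB, sum_mul]
  rw [sum_comm]
  refine sum_congr rfl fun k _ => ?_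
  simp

theorem mul_sum_sub_card_mul_le {ι : Type*} [Fintype ι] (α c w : ι → ℝ) (t M : ℝ)
    (hc : ∀ k, α k * t - 1 ≤ c k) (hw : ∀ k, 0 ≤ w k) (hwM : ∀ k, w k ≤ M) :
    t * ∑ k, α k * w k - Fintype.card ι * M ≤ ∑ k, c k * w k :=
  calc t * ∑ k, α k * w k - Fintype.card ι * M
      ≤ t * ∑ k, α k * w k - ∑ k, w k := by
        gcongr
        simpa using sum_le_sum fun k (_ : k ∈ univ) => hwM k
    _ = ∑ k, (α k * t - 1) * w k := by
        rw [mul_sum, ← sum_sub_distrib]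
        exact sum_congr rfl fun k _ => by ring
    _ ≤ ∑ k, c k * w k := by gcongr with k; exacts [hw k, hc k]

/-- Combining the greedy selection invariant with the Birkhoff decomposition
B = Σ_k α_k M_k (permutation matrices M_k given by permutations σ_k): if each agent's
fractional value under B is at least b, then after every round t of the greedy process
each agent's accumulated value Σ_k n_{k,t}·u_i(σ_k(i)) is at least t·b − d·max_j u_i(j). -/
theorem greedy_decomposition_value_bound (n d : ℕ)
    (α : Fin d → ℝ) (hα : ∀ k, 0 < α k) (hsum : ∑ k, α k = 1)
    (σ : Fin d → Equiv.Perm (Fin n))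
    (B : Matrix (Fin n) (Fin n) ℝ)
    (hB : ∀ i j, B i j = ∑ k, α k * (if σ k i = j then 1 else 0))
    (u : Fin n → Fin n → ℝ) (hu : ∀ i j, 0 ≤ u i j)
    (b : ℝ) (hb : ∀ i, b ≤ ∑ j, B i j * u i j)
    (counts : ℕ → Fin d → ℕ) (sel : ℕ → Fin d)
    (h0 : ∀ k, counts 0 k = 0)
    (hstep : ∀ t, counts (t + 1) =
      Function.update (counts t) (sel t) (counts t (sel t) + 1))
    (hmin : ∀ t k, ((counts t (sel t) : ℝ) + 1) / α (sel t) ≤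
      ((counts t k : ℝ) + 1) / α k) :
    ∀ (t : ℕ) (i : Fin n),
      (t : ℝ) * b - (d : ℝ) * (Finset.univ.sup' ⟨i, Finset.mem_univ i⟩ (u i)) ≤
        ∑ k, (counts t k : ℝ) * u i (σ k i) := by
  intro t i
  have hb' : b ≤ ∑ k, α k * u i (σ k i) := by
    rw [← sum_mul_eq_sum_comp α (fun k => σ k) B hB i (u i)]
    exact hb i
  calc (t : ℝ) * b - d * univ.sup' ⟨i, mem_univ i⟩ (u i)
      ≤ t * ∑ k, α k * u i (σ k i) - d * univ.sup' ⟨i, mem_univ i⟩ (u i) := by gcongr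
    _ ≤ ∑ k, (counts t k : ℝ) * u i (σ k i) := by
      simpa using mul_sum_sub_card_mul_le α (fun k => (counts t k : ℝ)) (fun k => u i (σ k i))
        t _ (GreedySchedule.mul_sub_one_le_counts hα hsum h0 hstep hmin t) (fun k => hu i _)
        (fun k => le_sup' (u i) (mem_univ _))
end
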